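/- arXiv:0901.3661 — 6 statements merged into one kernel-verified Lean document; each statement's English description precedes it below -/
import Mathlib

section
/- A continuous surjection f : X → Y between continua is atomic if and only if every fiber f⁻¹(y), y ∈ Y, is a terminal subcontinuum of X. -/
/-- A subcontinuum of a space: a nonempty compact connected subset.
(`IsConnected` includes nonemptiness.) -/
def IsSubcontinuum {X : Type*} [TopologicalSpace X] (T : Set X) : Prop :=
  IsCompact T ∧ IsConnected T

/-- A subcontinuum `T` of `X` is terminal if every subcontinuum of `X` meeting both `T`
and its complement contains `T`. -/
def IsTerminalIn {X : Type*} [TopologicalSpace X] (T : Set X) : Prop :=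
  ∀ K : Set X, IsCompact K → IsConnected K →
    (K ∩ T).Nonempty → (K ∩ Tᶜ).Nonempty → T ⊆ K

/-- A map between continua is atomic if `f ⁻¹' (f '' A) = A` for every subcontinuum `A`
with nondegenerate image. -/
def IsAtomicMap {X Y : Type*} [TopologicalSpace X] [TopologicalSpace Y] (f : X → Y) : Prop :=
  ∀ A : Set X, IsCompact A → IsConnected A → (f '' A).Nontrivial → f ⁻¹' (f '' A) = A

/-- In a compact Hausdorff space, if the connected component of a point is contained in an
open set, then some clopen set containing the point is contained in that open set. -/
lemma exists_clopen_of_connectedComponent_subset {Z : Type*} [TopologicalSpace Z] [T2Space Z]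
    [CompactSpace Z] {z : Z} {W : Set Z} (hW : IsOpen W) (h : connectedComponent z ⊆ W) :
    ∃ V : Set Z, IsClopen V ∧ z ∈ V ∧ V ⊆ W := by
  let N := { s : Set Z // IsClopen s ∧ z ∈ s }
  haveI : Nonempty N := ⟨⟨Set.univ, isClopen_univ, Set.mem_univ z⟩⟩
  have hdir : Directed (· ⊇ ·) fun s : N => s.val := by
    rintro ⟨s, hs, hzs⟩ ⟨t, ht, hzt⟩
    exact ⟨⟨s ∩ t, hs.inter ht, ⟨hzs, hzt⟩⟩, Set.inter_subset_left, Set.inter_subset_right⟩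
  have h_nhd : ∀ y ∈ ⋂ s : N, s.val, W ∈ nhds y := fun y hy => by
    rw [← connectedComponent_eq_iInter_isClopen] at hy
    exact hW.mem_nhds (h hy)
  obtain ⟨⟨s, hs, hzs⟩, hsW⟩ :=
    exists_subset_nhds_of_compactSpace hdir (fun s => s.2.1.1) h_nhd
  exact ⟨s, hs, hzs, hsW⟩

/-- Boundary bumping: in a compact connected Hausdorff space, the connected component of a
point `x ∈ U` in `closure U` (for `U` open with nonempty `(closure U)ᶜ`) meets the frontier
of `U`. -/
lemma component_meets_frontier {X : Type*} [TopologicalSpace X] [T2Space X] [CompactSpace X]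
    [ConnectedSpace X] {U : Set X} (hU : IsOpen U) {x : X} (hx : x ∈ U)
    (hne : (closure U)ᶜ.Nonempty) :
    ∃ K : Set X, IsCompact K ∧ IsConnected K ∧ x ∈ K ∧ K ⊆ closure U ∧
      (K ∩ frontier U).Nonempty := by
  set F : Set X := closure U with hF
  have hFc : IsClosed F := isClosed_closure
  haveI : CompactSpace F := isCompact_iff_compactSpace.1 hFc.isCompact
  set z : F := ⟨x, subset_closure hx⟩ with hz
  set K' : Set F := connectedComponent z with hK'
  set K : Set X := Subtype.val '' K' with hK
  have hKcomp : IsCompact K := by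
    have : IsCompact K' := isClosed_connectedComponent.isCompact
    exact this.image continuous_subtype_val
  have hKconn : IsConnected K :=
    isConnected_connectedComponent.image _ continuous_subtype_val.continuousOn
  have hxK : x ∈ K := ⟨z, mem_connectedComponent, rfl⟩
  have hKF : K ⊆ F := by rintro p ⟨q, _, rfl⟩; exact q.2
  refine ⟨K, hKcomp, hKconn, hxK, hKF, ?_⟩
  by_contra hfr
  rw [Set.not_nonempty_iff_eq_empty] at hfr
  -- then K ⊆ U
  have hKU : K ⊆ U := by
    intro p hp
    have hpF : p ∈ F := hKF hp
    by_contra hpU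
    have : p ∈ frontier U := by
      rw [hU.frontier_eq]; exact ⟨hpF, hpU⟩
    exact Set.eq_empty_iff_forall_notMem.1 hfr p ⟨hp, this⟩
  -- so connectedComponent z ⊆ (val ⁻¹' U), an open set in F
  have hsub : connectedComponent z ⊆ (Subtype.val ⁻¹' U : Set F) := by
    intro q hq
    exact hKU ⟨q, hq, rfl⟩
  obtain ⟨V, hVclopen, hzV, hVU⟩ :=
    exists_clopen_of_connectedComponent_subset (hU.preimage continuous_subtype_val) hsub
  set W : Set X := Subtype.val '' V with hW
  have hWU : W ⊆ U := by rintro p ⟨q, hq, rfl⟩; exact hVU hq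
  have hWclosed : IsClosed W :=
    (hVclopen.1.isCompact.image continuous_subtype_val).isClosed
  have hWopen : IsOpen W := by
    obtain ⟨O, hO, hOV⟩ := isOpen_induced_iff.1 hVclopen.2
    have hWOF : W = F ∩ O := by
      rw [hW, ← hOV, Subtype.image_preimage_coe]
    have : W = O ∩ U := by
      apply Set.Subset.antisymm
      · intro p hp
        exact ⟨(hWOF ▸ hp).2, hWU hp⟩
      · intro p hp
        rw [hWOF]; exact ⟨subset_closure hp.2, hp.1⟩
    rw [this]; exact hO.inter hU
  have hWuniv : W = Set.univ :=
    ((isClopen_iff.1 ⟨hWclosed, hWopen⟩).resolve_left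
      (Set.nonempty_iff_ne_empty.1 ⟨x, ⟨z, hzV, rfl⟩⟩))
  obtain ⟨p, hp⟩ := hne
  exact hp (subset_closure (hWU (hWuniv ▸ Set.mem_univ p)))

/-- A continuous surjection between continua is atomic iff every fiber is a terminal
subcontinuum. -/
theorem atomic_iff_fibers_terminal {X Y : Type*} [MetricSpace X] [MetricSpace Y]
    [CompactSpace X] [ConnectedSpace X] [CompactSpace Y] [ConnectedSpace Y]
    (f : X → Y) (hf : Continuous f) (hsurj : Function.Surjective f) :
    IsAtomicMap f ↔ ∀ y : Y, IsSubcontinuum (f ⁻¹' {y}) ∧ IsTerminalIn (f ⁻¹' {y}) := by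
  constructor
  · intro hA
    -- terminality follows directly from atomicity
    have hterm : ∀ y : Y, IsTerminalIn (f ⁻¹' {y}) := by
      intro y K hKc hKconn hKT hKTc
      obtain ⟨a, haK, hay⟩ := hKT
      obtain ⟨b, hbK, hby⟩ := hKTc
      have hay' : f a = y := hay
      have hby' : f b ≠ y := hby
      have hnt : (f '' K).Nontrivial :=
        ⟨f a, Set.mem_image_of_mem f haK, f b, Set.mem_image_of_mem f hbK,
          by rw [hay']; exact fun h => hby' h.symm⟩
      have hKeq := hA K hKc hKconn hnt
      intro x hx
      have hx' : f x = y := hx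
      rw [← hKeq]
      show f x ∈ f '' K
      rw [hx', ← hay']
      exact Set.mem_image_of_mem f haK
    intro y
    set Q : Set X := f ⁻¹' {y} with hQdef
    have hQclosed : IsClosed Q := isClosed_singleton.preimage hf
    have hQcomp : IsCompact Q := hQclosed.isCompact
    have hQne : Q.Nonempty := hsurj y
    refine ⟨⟨hQcomp, hQne, ?_⟩, hterm y⟩
    -- connectivity of the fiber
    by_contra hpc
    rw [isPreconnected_iff_subset_of_fully_disjoint_closed hQclosed] at hpc
    push_neg at hpc
    obtain ⟨u, v, hu, hv, hQuv, huv, hQu, hQv⟩ := hpc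
    set A : Set X := Q ∩ u with hAdef
    set B : Set X := Q ∩ v with hBdef
    have hAclosed : IsClosed A := hQclosed.inter hu
    have hBclosed : IsClosed B := hQclosed.inter hv
    have hAne : A.Nonempty := by
      obtain ⟨q, hq, hqv⟩ := Set.not_subset.1 hQv
      exact ⟨q, hq, (hQuv hq).resolve_right hqv⟩
    have hBne : B.Nonempty := by
      obtain ⟨q, hq, hqu⟩ := Set.not_subset.1 hQu
      exact ⟨q, hq, (hQuv hq).resolve_left hqu⟩
    have hAB : Disjoint A B :=
      Set.disjoint_of_subset Set.inter_subset_right Set.inter_subset_right huv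
    obtain ⟨U, V', hUo, hVo, hAU, hBV, hUV⟩ := normal_separation hAclosed hBclosed hAB
    have hclUV : Disjoint (closure U) B := by
      have h1 : closure U ⊆ V'ᶜ :=
        closure_minimal (Set.subset_compl_iff_disjoint_right.2 hUV) hVo.isClosed_compl
      exact Set.disjoint_of_subset_left h1
        (Set.disjoint_of_subset_right hBV disjoint_compl_left)
    obtain ⟨x, hxA⟩ := hAne
    obtain ⟨b, hbB⟩ := hBne
    have hbcl : b ∉ closure U := fun h => hclUV.ne_of_mem h hbB rfl
    obtain ⟨K, hKc, hKconn, hxK, hKcl, ⟨p, hpK, hpfr⟩⟩ :=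
      component_meets_frontier hUo (hAU hxA) ⟨b, hbcl⟩
    have hpQ : p ∉ Q := by
      intro hpQ
      rw [hUo.frontier_eq] at hpfr
      rcases hQuv hpQ with hpu | hpv
      · exact hpfr.2 (hAU ⟨hpQ, hpu⟩)
      · exact hclUV.ne_of_mem hpfr.1 ⟨hpQ, hpv⟩ rfl
    have hQK : Q ⊆ K :=
      hterm y K hKc hKconn ⟨x, hxK, hxA.1⟩ ⟨p, hpK, hpQ⟩
    exact hbcl (hKcl (hQK hbB.1))
  · -- converse
    intro h A hAc hAconn hnt
    apply Set.Subset.antisymm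
    · intro x hx
      obtain ⟨a, haA, hfa⟩ := hx
      set Q : Set X := f ⁻¹' {f x} with hQdef
      have haQ : a ∈ Q := by simp [hQdef, hfa]
      have hAQc : (A ∩ Qᶜ).Nonempty := by
        by_contra hempty
        rw [Set.not_nonempty_iff_eq_empty, ← Set.disjoint_iff_inter_eq_empty,
          Set.disjoint_compl_right_iff_subset] at hempty
        obtain ⟨c, hc, d, hd, hcd⟩ := hnt
        obtain ⟨c', hc'A, rfl⟩ := hc
        obtain ⟨d', hd'A, rfl⟩ := hd
        exact hcd ((hempty hc'A).trans (hempty hd'A).symm)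
      have := (h (f x)).2 A hAc hAconn ⟨a, haA, haQ⟩ hAQc
      exact this (by simp [hQdef])
    · exact Set.subset_preimage_image f A
end

section
/- Let X be a continuum and f : X → [0,1] a monotone open continuous surjection such that f⁻¹(y) is a nondegenerate terminal subcontinuum of X for each y ∈ [0,1]. Let Z be the quotient space obtained from X by shrinking f⁻¹(1) to a point, let p : X → Z be the quotient map, and let q : Z → [0,1] be the induced map (q ∘ p = f). Then Z is a continuum, q is a monotone open continuous surjection, q⁻¹(1) is a one-point set, and q⁻¹(y) is a nondegenerate terminal subcontinuum of Z for each y ∈ [0,1); in particular, q is an atomic map. -/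
open unitInterval

/-!
Shrinking `f ⁻¹' {1}` to a point only changes `X` inside one fiber of `f`, so the fibers of `q`
are the images of those of `f`, and `p` has connected fibers. The latter makes the preimage of a
subcontinuum of `Z` a subcontinuum of `X`, which is how terminality passes from the fibers of `f`
to those of `q`. A map whose fibers are all terminal is atomic: a subcontinuum with
nondegenerate image meets every fiber it touches and also its complement, so it contains it.
-/

open Set Function Topology

def ShrinksToPoint {X Z : Type*} (p : X → Z) (S : Set X) : Prop :=
  ∀ x x', p x = p x' ↔ x = x' ∨ x ∈ S ∧ x' ∈ S

namespace ShrinksToPoint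

variable {X Z : Type*} {p : X → Z} {S : Set X}

lemma image_eq_singleton (h : ShrinksToPoint p S) {x : X} (hx : x ∈ S) : p '' S = {p x} := by
  refine (image_subset_iff.2 fun x' hx' => ?_).antisymm (singleton_subset_iff.2 ⟨x, hx, rfl⟩)
  exact (h x' x).2 (Or.inr ⟨hx', hx⟩)

lemma injOn (h : ShrinksToPoint p S) {T : Set X} (hT : Disjoint T S) : InjOn p T := by
  intro x hx x' _ hxx'
  exact ((h x x').1 hxx').resolve_right fun hxS => hT.notMem_of_mem_left hx hxS.1

lemma isConnected_preimage_singleton [TopologicalSpace X] (h : ShrinksToPoint p S)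
    (hps : Surjective p) (hS : IsConnected S) (z : Z) : IsConnected (p ⁻¹' {z}) := by
  obtain ⟨x, rfl⟩ := hps z
  by_cases hx : x ∈ S
  · convert hS using 1
    ext x'
    simpa [h x' x, hx] using fun h : x' = x => h ▸ hx
  · convert isConnected_singleton (x := x) using 1
    ext x'
    simp [h x' x, hx]

end ShrinksToPoint

lemma IsTerminalIn.of_preimage {X Z : Type*} [TopologicalSpace X] [CompactSpace X]
    [TopologicalSpace Z] [T2Space Z] {p : X → Z} (hp : IsQuotientMap p)
    (hfib : ∀ z, IsConnected (p ⁻¹' {z})) {S : Set Z} (hS : IsTerminalIn (p ⁻¹' S)) :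
    IsTerminalIn S := by
  rintro K hKc hKconn ⟨z₀, hK₀, hS₀⟩ ⟨z₁, hK₁, hS₁⟩
  obtain ⟨x₀, rfl⟩ := hp.surjective z₀
  obtain ⟨x₁, rfl⟩ := hp.surjective z₁
  have hKcl : IsClosed K := hKc.isClosed
  rw [← hp.surjective.preimage_subset_preimage_iff]
  exact hS _ (hKcl.preimage hp.continuous).isCompact
    (hp.isCoinducing.isConnected_preimage_of_isClosed hfib hKcl hKconn)
    ⟨x₀, hK₀, hS₀⟩ ⟨x₁, hK₁, hS₁⟩

lemma IsAtomicMap.of_isTerminalIn_preimage_singleton {X Y : Type*} [TopologicalSpace X]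
    [TopologicalSpace Y] {q : X → Y} (hq : ∀ y, IsTerminalIn (q ⁻¹' {y})) :
    IsAtomicMap q := by
  intro A hAc hAconn hAnt
  refine Subset.antisymm (fun z ⟨a, ha, hqa⟩ => ?_) (subset_preimage_image q A)
  obtain ⟨b, ⟨b', hb', rfl⟩, hb⟩ := hAnt.exists_ne (q z)
  exact hq (q z) A hAc hAconn ⟨a, ha, hqa⟩ ⟨b', hb', hb⟩ rfl

theorem quotient_shrinking_top_fiber_general {X : Type*} [MetricSpace X] [CompactSpace X]
    [ConnectedSpace X]
    (f : X → unitInterval) (hfc : Continuous f) (hfs : Function.Surjective f)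
    (hfopen : IsOpenMap f)
    (hffib : ∀ y : unitInterval,
      (f ⁻¹' {y}).Nontrivial ∧ IsSubcontinuum (f ⁻¹' {y}) ∧ IsTerminalIn (f ⁻¹' {y}))
    {Z : Type*} [MetricSpace Z] (p : X → Z) (hp : Topology.IsQuotientMap p)
    (hpid : ∀ x x' : X, p x = p x' ↔ (x = x' ∨ (f x = 1 ∧ f x' = 1)))
    (q : Z → unitInterval) (hqp : q ∘ p = f) :
    CompactSpace Z ∧ ConnectedSpace Z ∧
    Continuous q ∧ Function.Surjective q ∧
    (∀ y : unitInterval, IsConnected (q ⁻¹' {y})) ∧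
    IsOpenMap q ∧
    (∃ z : Z, q ⁻¹' {1} = {z}) ∧
    (∀ y : unitInterval, y < 1 →
      (q ⁻¹' {y}).Nontrivial ∧ IsSubcontinuum (q ⁻¹' {y}) ∧ IsTerminalIn (q ⁻¹' {y})) ∧
    IsAtomicMap q := by
  have hshrink : ShrinksToPoint p (f ⁻¹' {1}) := hpid
  have hq_fiber (y : I) : q ⁻¹' {y} = p '' (f ⁻¹' {y}) := by
    rw [← hqp, preimage_comp, hp.surjective.image_preimage]
  have hq_conn (y : I) : IsConnected (q ⁻¹' {y}) :=
    hq_fiber y ▸ (hffib y).2.1.2.image p hp.continuous.continuousOn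
  have hq_term (y : I) : IsTerminalIn (q ⁻¹' {y}) :=
    .of_preimage hp (hshrink.isConnected_preimage_singleton hp.surjective (hffib 1).2.1.2)
      (by rw [← preimage_comp, hqp]; exact (hffib y).2.2)
  obtain ⟨x₁, hx₁⟩ := hfs 1
  refine ⟨⟨hp.surjective.range_eq ▸ isCompact_range hp.continuous⟩,
    hp.surjective.connectedSpace hp.continuous, hp.continuous_iff.2 (hqp ▸ hfc),
    (hqp ▸ hfs : Surjective (q ∘ p)).of_comp, hq_conn,
    .of_comp hp.continuous hp.surjective (hqp ▸ hfopen),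
    ⟨p x₁, hq_fiber 1 ▸ hshrink.image_eq_singleton hx₁⟩,
    fun y hy => ⟨?_, ⟨?_, hq_conn y⟩, hq_term y⟩,
    .of_isTerminalIn_preimage_singleton hq_term⟩
  · rw [hq_fiber]
    exact (hffib y).1.image_of_injOn (hshrink.injOn (.preimage f (disjoint_singleton.2 hy.ne)))
  · rw [hq_fiber]
    exact (hffib y).2.1.1.image hp.continuous

/-- Shrinking the fiber `f ⁻¹' {1}` of a monotone open continuous surjection
`f : X → [0,1]` with nondegenerate terminal fibers to a point yields a continuum `Z`,
and the induced map `q : Z → [0,1]` is a monotone open continuous surjection with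
`q ⁻¹' {1}` a one-point set and all other fibers nondegenerate terminal subcontinua;
in particular `q` is atomic. -/
theorem quotient_shrinking_top_fiber {X : Type*} [MetricSpace X] [CompactSpace X]
    [ConnectedSpace X]
    (f : X → unitInterval) (hfc : Continuous f) (hfs : Function.Surjective f)
    (hfmono : ∀ y : unitInterval, IsConnected (f ⁻¹' {y}))
    (hfopen : IsOpenMap f)
    (hffib : ∀ y : unitInterval,
      (f ⁻¹' {y}).Nontrivial ∧ IsSubcontinuum (f ⁻¹' {y}) ∧ IsTerminalIn (f ⁻¹' {y}))
    {Z : Type*} [MetricSpace Z] (p : X → Z) (hp : Topology.IsQuotientMap p)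
    (hpid : ∀ x x' : X, p x = p x' ↔ (x = x' ∨ (f x = 1 ∧ f x' = 1)))
    (q : Z → unitInterval) (hqp : q ∘ p = f) :
    CompactSpace Z ∧ ConnectedSpace Z ∧
    Continuous q ∧ Function.Surjective q ∧
    (∀ y : unitInterval, IsConnected (q ⁻¹' {y})) ∧
    IsOpenMap q ∧
    (∃ z : Z, q ⁻¹' {1} = {z}) ∧
    (∀ y : unitInterval, y < 1 →
      (q ⁻¹' {y}).Nontrivial ∧ IsSubcontinuum (q ⁻¹' {y}) ∧ IsTerminalIn (q ⁻¹' {y})) ∧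
    IsAtomicMap q :=
  quotient_shrinking_top_fiber_general f hfc hfs hfopen hffib p hp hpid q hqp
end

section
/- Let Z be a continuum and q : Z → [0,1] a monotone open continuous surjection such that q⁻¹(1) is a one-point set and q⁻¹(y) is a nondegenerate terminal subcontinuum of Z for each y ∈ [0,1). Then Z does not have a cut-point. -/
open unitInterval

/-- A space has a cut-point if removing some point disconnects it. -/
def HasCutPoint (X : Type*) [TopologicalSpace X] : Prop :=
  ∃ p : X, ¬ IsPreconnected ({p}ᶜ : Set X)

/-- Singletons are not open in the unit interval. -/
lemma singleton_not_open (t : unitInterval) : ¬ IsOpen ({t} : Set unitInterval) := by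
  intro h
  have hclopen : IsClopen ({t} : Set unitInterval) := ⟨isClosed_singleton, h⟩
  have huniv := hclopen.eq_univ ⟨t, rfl⟩
  have h0 : (0 : unitInterval) ∈ ({t} : Set unitInterval) := huniv ▸ Set.mem_univ _
  have h1 : (1 : unitInterval) ∈ ({t} : Set unitInterval) := huniv ▸ Set.mem_univ _
  have : (0 : unitInterval) = 1 := by
    rw [Set.mem_singleton_iff] at h0 h1; rw [h0, h1]
  exact (by norm_num : (0 : unitInterval) ≠ 1) this

/-- If removing `p` from a preconnected space leaves a separation `U, V`, then
`U ∪ {p}` is preconnected. -/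
lemma union_point_preconnected {Z : Type*} [TopologicalSpace Z] [CompactSpace Z]
    [PreconnectedSpace Z] {U V : Set Z} {p : Z}
    (hU : IsOpen U) (hV : IsOpen V) (hdisj : U ∩ V = ∅) (hcov : U ∪ V = {p}ᶜ) :
    IsPreconnected (U ∪ {p}) := by
  have hpU : p ∉ U := fun hp => by
    have : p ∈ ({p}ᶜ : Set Z) := hcov ▸ Or.inl hp
    exact this rfl
  have hpV : p ∉ V := fun hp => by
    have : p ∈ ({p}ᶜ : Set Z) := hcov ▸ Or.inr hp
    exact this rfl
  have hK : U ∪ {p} = Vᶜ := by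
    ext x
    simp only [Set.mem_union, Set.mem_singleton_iff, Set.mem_compl_iff]
    constructor
    · rintro (hx | rfl)
      · exact fun hxV => (Set.eq_empty_iff_forall_notMem.mp hdisj x) ⟨hx, hxV⟩
      · exact hpV
    · intro hxV
      by_cases hxp : x = p
      · exact Or.inr hxp
      · have : x ∈ U ∪ V := hcov ▸ hxp
        rcases this with h | h
        · exact Or.inl h
        · exact absurd h hxV
  have hKclosed : IsClosed (U ∪ {p}) := hK ▸ hV.isClosed_compl
  rw [isPreconnected_iff_subset_of_fully_disjoint_closed hKclosed]
  intro c₁ c₂ hc₁ hc₂ hsub hdisj'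
  -- symmetric helper
  have key : ∀ d₁ d₂ : Set Z, IsClosed d₁ → IsClosed d₂ → U ∪ {p} ⊆ d₁ ∪ d₂ →
      Disjoint d₁ d₂ → p ∈ d₁ → U ∪ {p} ⊆ d₁ := by
    intro d₁ d₂ hd₁ hd₂ hsub' hdisj'' hpd₁
    have hpd₂ : p ∉ d₂ := fun hp => (Set.disjoint_left.mp hdisj'' hpd₁) hp
    have hBeq : U ∩ d₁ᶜ = (U ∪ {p}) ∩ d₂ := by
      ext x
      simp only [Set.mem_inter_iff, Set.mem_compl_iff, Set.mem_union, Set.mem_singleton_iff]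
      constructor
      · rintro ⟨hxU, hxd₁⟩
        rcases hsub' (Or.inl hxU) with h | h
        · exact absurd h hxd₁
        · exact ⟨Or.inl hxU, h⟩
      · rintro ⟨hx | rfl, hxd₂⟩
        · exact ⟨hx, fun hxd₁ => (Set.disjoint_left.mp hdisj'' hxd₁) hxd₂⟩
        · exact absurd hxd₂ hpd₂
    have hBopen : IsOpen (U ∩ d₁ᶜ) := hU.inter hd₁.isOpen_compl
    have hBclosed : IsClosed (U ∩ d₁ᶜ) := hBeq ▸ hKclosed.inter hd₂
    by_cases hBne : (U ∩ d₁ᶜ).Nonempty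
    · have : U ∩ d₁ᶜ = Set.univ := IsClopen.eq_univ ⟨hBclosed, hBopen⟩ hBne
      have : p ∈ U ∩ d₁ᶜ := this ▸ Set.mem_univ _
      exact absurd this.1 hpU
    · rw [Set.not_nonempty_iff_eq_empty] at hBne
      rintro x (hx | rfl)
      · by_contra hxd₁
        exact (Set.eq_empty_iff_forall_notMem.mp hBne x) ⟨hx, hxd₁⟩
      · exact hpd₁
  rcases hsub (Or.inr rfl : p ∈ U ∪ {p}) with hp | hp
  · exact Or.inl (key c₁ c₂ hc₁ hc₂ hsub hdisj' hp)
  · exact Or.inr (key c₂ c₁ hc₂ hc₁ (by rw [Set.union_comm c₂ c₁]; exact hsub) hdisj'.symm hp)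

/-- If `Z` is a continuum and `q : Z → [0,1]` is a monotone open continuous surjection
such that `q ⁻¹' {1}` is a one-point set and `q ⁻¹' {y}` is a nondegenerate terminal
subcontinuum for each `y ∈ [0,1)`, then `Z` has no cut-point. -/
theorem no_cut_point {Z : Type*} [MetricSpace Z] [CompactSpace Z] [ConnectedSpace Z]
    (q : Z → unitInterval) (hqc : Continuous q) (hqs : Function.Surjective q)
    (hqmono : ∀ y : unitInterval, IsConnected (q ⁻¹' {y}))
    (hqopen : IsOpenMap q)
    (h1 : ∃ z : Z, q ⁻¹' {1} = {z})
    (hfib : ∀ y : unitInterval, y < 1 →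
      (q ⁻¹' {y}).Nontrivial ∧ IsSubcontinuum (q ⁻¹' {y}) ∧ IsTerminalIn (q ⁻¹' {y})) :
    ¬ HasCutPoint Z := by
  rintro ⟨p, hp⟩
  rw [IsPreconnected] at hp
  push_neg at hp
  obtain ⟨u, v, hu, hv, hcov, hune, hvne, hempty⟩ := hp
  -- build the separation U, V of {p}ᶜ
  set U : Set Z := u ∩ {p}ᶜ with hUdef
  set V : Set Z := v ∩ {p}ᶜ with hVdef
  have hpc_open : IsOpen ({p}ᶜ : Set Z) := isClosed_singleton.isOpen_compl
  have hUopen : IsOpen U := hu.inter hpc_open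
  have hVopen : IsOpen V := hv.inter hpc_open
  have hUV : U ∩ V = ∅ := by
    rw [Set.eq_empty_iff_forall_notMem]
    rintro x ⟨⟨hxu, hxp⟩, hxv, -⟩
    exact (Set.eq_empty_iff_forall_notMem.mp hempty x) ⟨hxp, hxu, hxv⟩
  have hcovUV : U ∪ V = {p}ᶜ := by
    ext x
    constructor
    · rintro (⟨-, hxp⟩ | ⟨-, hxp⟩) <;> exact hxp
    · intro hxp
      rcases hcov hxp with h | h
      · exact Or.inl ⟨h, hxp⟩
      · exact Or.inr ⟨h, hxp⟩
  have hUne : U.Nonempty := by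
    obtain ⟨x, hx1, hx2⟩ := hune; exact ⟨x, hx2, hx1⟩
  have hVne : V.Nonempty := by
    obtain ⟨x, hx1, hx2⟩ := hvne; exact ⟨x, hx2, hx1⟩
  have hpU : p ∉ U := fun h => h.2 rfl
  have hpV : p ∉ V := fun h => h.2 rfl
  -- the two subcontinua K₁, K₂
  set K₁ : Set Z := U ∪ {p} with hK₁def
  set K₂ : Set Z := V ∪ {p} with hK₂def
  have hK₁pre : IsPreconnected K₁ := union_point_preconnected hUopen hVopen hUV hcovUV
  have hK₂pre : IsPreconnected K₂ := by
    have h' : V ∩ U = ∅ := by rw [Set.inter_comm]; exact hUV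
    have h'' : V ∪ U = {p}ᶜ := by rw [Set.union_comm]; exact hcovUV
    exact union_point_preconnected hVopen hUopen h' h''
  have hK₁conn : IsConnected K₁ := ⟨⟨p, Or.inr rfl⟩, hK₁pre⟩
  have hK₂conn : IsConnected K₂ := ⟨⟨p, Or.inr rfl⟩, hK₂pre⟩
  have hK₁V : K₁ = Vᶜ := by
    ext x
    simp only [hK₁def, Set.mem_union, Set.mem_singleton_iff, Set.mem_compl_iff]
    constructor
    · rintro (hx | rfl)
      · exact fun hxV => (Set.eq_empty_iff_forall_notMem.mp hUV x) ⟨hx, hxV⟩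
      · exact hpV
    · intro hxV
      by_cases hxp : x = p
      · exact Or.inr hxp
      · have hx' : x ∈ U ∪ V := hcovUV ▸ (hxp : x ∈ ({p}ᶜ : Set Z))
        rcases hx' with h | h
        · exact Or.inl h
        · exact absurd h hxV
  have hK₂U : K₂ = Uᶜ := by
    ext x
    simp only [hK₂def, Set.mem_union, Set.mem_singleton_iff, Set.mem_compl_iff]
    constructor
    · rintro (hx | rfl)
      · exact fun hxU => (Set.eq_empty_iff_forall_notMem.mp hUV x) ⟨hxU, hx⟩
      · exact hpU
    · intro hxU
      by_cases hxp : x = p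
      · exact Or.inr hxp
      · have hx' : x ∈ U ∪ V := hcovUV ▸ (hxp : x ∈ ({p}ᶜ : Set Z))
        rcases hx' with h | h
        · exact absurd h hxU
        · exact Or.inl h
  have hK₁closed : IsClosed K₁ := hK₁V ▸ hVopen.isClosed_compl
  have hK₂closed : IsClosed K₂ := hK₂U ▸ hUopen.isClosed_compl
  have hK₁comp : IsCompact K₁ := hK₁closed.isCompact
  have hK₂comp : IsCompact K₂ := hK₂closed.isCompact
  have hK₁K₂ : K₁ ∩ K₂ ⊆ {p} := by
    rintro x ⟨hx1 | hx1, hx2 | hx2⟩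
    · exact absurd (Set.eq_empty_iff_forall_notMem.mp hUV x) (by simp [hx1, hx2])
    · exact hx2
    · exact hx1
    · exact hx1
  -- key: no open nonempty set maps into a singleton
  have hopen_fiber : ∀ (W : Set Z), IsOpen W → W.Nonempty → ∀ t : unitInterval,
      ¬ W ⊆ q ⁻¹' {t} := by
    intro W hW hWne t hsub
    have himg : q '' W = {t} := by
      apply Set.Subset.antisymm
      · rintro y ⟨x, hxW, rfl⟩; exact hsub hxW
      · rintro y rfl
        obtain ⟨x, hx⟩ := hWne
        exact ⟨x, hx, hsub hx⟩
    exact singleton_not_open t (himg ▸ hqopen W hW)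
  -- the main contradiction machine
  have main : ∀ t : unitInterval, t < 1 →
      (K₁ ∩ q ⁻¹' {t}).Nonempty → (K₂ ∩ q ⁻¹' {t}).Nonempty →
      (K₁ ∩ (q ⁻¹' {t})ᶜ).Nonempty → (K₂ ∩ (q ⁻¹' {t})ᶜ).Nonempty → False := by
    intro t ht h1' h2' h3' h4'
    obtain ⟨hnt, _, hterm⟩ := hfib t ht
    have hsub1 : q ⁻¹' {t} ⊆ K₁ := hterm K₁ hK₁comp hK₁conn h1' h3'
    have hsub2 : q ⁻¹' {t} ⊆ K₂ := hterm K₂ hK₂comp hK₂conn h2' h4'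
    have : q ⁻¹' {t} ⊆ {p} := fun x hx => hK₁K₂ ⟨hsub1 hx, hsub2 hx⟩
    obtain ⟨a, ha, b, hb, hab⟩ := hnt
    exact hab (by rw [this ha, this hb])
  by_cases hqp : q p < 1
  · -- the fiber through p is nondegenerate terminal
    set t := q p with htdef
    have hp1 : p ∈ K₁ ∩ q ⁻¹' {t} := ⟨Or.inr rfl, rfl⟩
    have hp2 : p ∈ K₂ ∩ q ⁻¹' {t} := ⟨Or.inr rfl, rfl⟩
    have h3' : (K₁ ∩ (q ⁻¹' {t})ᶜ).Nonempty := by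
      by_contra h
      rw [Set.not_nonempty_iff_eq_empty] at h
      have : U ⊆ q ⁻¹' {t} := fun x hx => by
        by_contra hx'
        exact (Set.eq_empty_iff_forall_notMem.mp h x) ⟨Or.inl hx, hx'⟩
      exact hopen_fiber U hUopen hUne t this
    have h4' : (K₂ ∩ (q ⁻¹' {t})ᶜ).Nonempty := by
      by_contra h
      rw [Set.not_nonempty_iff_eq_empty] at h
      have : V ⊆ q ⁻¹' {t} := fun x hx => by
        by_contra hx'
        exact (Set.eq_empty_iff_forall_notMem.mp h x) ⟨Or.inl hx, hx'⟩
      exact hopen_fiber V hVopen hVne t this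
    exact main t hqp ⟨p, hp1⟩ ⟨p, hp2⟩ h3' h4'
  · -- q p = 1
    have hqp1 : q p = 1 := le_antisymm (le_one _) (not_lt.mp hqp)
    -- find points of U, V not mapping to 1
    have hUex : ∃ x ∈ U, q x ≠ 1 := by
      by_contra h
      push_neg at h
      exact hopen_fiber U hUopen hUne 1 (fun x hx => h x hx)
    have hVex : ∃ x ∈ V, q x ≠ 1 := by
      by_contra h
      push_neg at h
      exact hopen_fiber V hVopen hVne 1 (fun x hx => h x hx)
    obtain ⟨a, haU, ha1⟩ := hUex
    obtain ⟨b, hbV, hb1⟩ := hVex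
    have ha1' : q a < 1 := lt_of_le_of_ne (le_one _) ha1
    have hb1' : q b < 1 := lt_of_le_of_ne (le_one _) hb1
    set t := max (q a) (q b) with htdef
    have ht1 : t < 1 := max_lt ha1' hb1'
    -- t is in the image of both K₁ and K₂ by the IVT
    have hIV1 : Set.Icc (q a) (q p) ⊆ q '' K₁ :=
      hK₁pre.intermediate_value (Or.inl haU) (Or.inr rfl) hqc.continuousOn
    have hIV2 : Set.Icc (q b) (q p) ⊆ q '' K₂ :=
      hK₂pre.intermediate_value (Or.inl hbV) (Or.inr rfl) hqc.continuousOn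
    have ht1' : t ∈ Set.Icc (q a) (q p) := by
      rw [hqp1]; exact ⟨le_max_left _ _, le_of_lt ht1⟩
    have ht2' : t ∈ Set.Icc (q b) (q p) := by
      rw [hqp1]; exact ⟨le_max_right _ _, le_of_lt ht1⟩
    obtain ⟨x₁, hx₁K, hx₁t⟩ := hIV1 ht1'
    obtain ⟨x₂, hx₂K, hx₂t⟩ := hIV2 ht2'
    have hpnotfib : p ∉ q ⁻¹' {t} := by
      simp only [Set.mem_preimage, Set.mem_singleton_iff, hqp1]
      exact fun h => absurd h.symm (ne_of_lt ht1)
    exact main t ht1 ⟨x₁, hx₁K, hx₁t⟩ ⟨x₂, hx₂K, hx₂t⟩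
      ⟨p, Or.inr rfl, hpnotfib⟩ ⟨p, Or.inr rfl, hpnotfib⟩
end

section
/- Let Z be a continuum, let q : Z → [0,1] be a monotone atomic continuous surjection, let μ : C(Z) → [0, μ(Z)] be a Whitney map, let s ∈ (0, μ(Z)), and let a, b ∈ (0,1) with a ≤ b satisfy μ(q⁻¹([a,b])) = s. Then every C ∈ μ⁻¹(s) satisfies C ⊆ q⁻¹([0,b]) or C ⊆ q⁻¹([a,1]); that is, μ⁻¹(s) = {C ∈ μ⁻¹(s) : C ⊆ q⁻¹([0,b])} ∪ {C ∈ μ⁻¹(s) : C ⊆ q⁻¹([a,1])}. -/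
open TopologicalSpace unitInterval

/-- The hyperspace `C(Z)` of subcontinua of `Z`. -/
abbrev Subcontinua (Z : Type*) [MetricSpace Z] : Type _ :=
  {C : NonemptyCompacts Z // IsConnected (C : Set Z)}

/-- A Whitney map for `C(Z)`. -/
def IsWhitneyMap {Z : Type*} [MetricSpace Z] (μ : Subcontinua Z → ℝ) : Prop :=
  Continuous μ ∧
  (∀ C : Subcontinua Z, (C.1 : Set Z).Subsingleton → μ C = 0) ∧
  ∀ A B : Subcontinua Z, (A.1 : Set Z) ⊂ (B.1 : Set Z) → μ A < μ B

/-!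
A subcontinuum `C` of the level `μ⁻¹(s)` reaching both below `a` and above `b` maps onto an
interval containing `[a, b]`; its image is nondegenerate, so atomicity makes `C` saturated and
hence `q⁻¹([a, b]) ⊊ C`. Then `μ(q⁻¹([a, b])) < μ(C)`, contradicting that both equal `s`.
-/

theorem IsAtomicMap.preimage_subset {X Y : Type*} [TopologicalSpace X] [TopologicalSpace Y]
    {f : X → Y} (hf : IsAtomicMap f) {A : Set X} (hAc : IsCompact A) (hA : IsConnected A)
    (hfA : (f '' A).Nontrivial) {S : Set Y} (hS : S ⊆ f '' A) : f ⁻¹' S ⊆ A :=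
  hf A hAc hA hfA ▸ Set.preimage_mono hS

theorem IsAtomicMap.preimage_Icc_ssubset {X Y : Type*} [TopologicalSpace X] [LinearOrder Y]
    [TopologicalSpace Y] [OrderTopology Y] {f : X → Y} (hf : IsAtomicMap f)
    (hfc : Continuous f) {C : Set X} (hCc : IsCompact C) (hC : IsConnected C)
    {a b : Y} (hab : a ≤ b) {x y : X} (hx : x ∈ C) (hy : y ∈ C) (hbx : b < f x)
    (hya : f y < a) : f ⁻¹' Set.Icc a b ⊂ C := by
  have hord : (f '' C).OrdConnected :=
    (hC.isPreconnected.image f hfc.continuousOn).ordConnected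
  have hIcc : Set.Icc a b ⊆ f '' C := fun t ht =>
    hord.out ⟨y, hy, rfl⟩ ⟨x, hx, rfl⟩ ⟨(hya.trans_le ht.1).le, (ht.2.trans_lt hbx).le⟩
  have hfC : (f '' C).Nontrivial :=
    ⟨f y, ⟨y, hy, rfl⟩, f x, ⟨x, hx, rfl⟩, (hya.trans (hab.trans_lt hbx)).ne⟩
  exact ⟨hf.preimage_subset hCc hC hfC hIcc, fun hCab => (hCab hx).2.not_gt hbx⟩

theorem whitney_level_covered_general {Z : Type*} [MetricSpace Z]
    (q : Z → unitInterval) (hqc : Continuous q)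
    (hqatomic : IsAtomicMap q)
    (μ : Subcontinua Z → ℝ) (hμ : IsWhitneyMap μ)
    (s : ℝ)
    (a b : unitInterval) (hab : a ≤ b)
    (K : Subcontinua Z) (hK : (K.1 : Set Z) = q ⁻¹' (Set.Icc a b)) (hμK : μ K = s) :
    ∀ C : Subcontinua Z, μ C = s →
      (C.1 : Set Z) ⊆ q ⁻¹' (Set.Icc 0 b) ∨ (C.1 : Set Z) ⊆ q ⁻¹' (Set.Icc a 1) := by
  intro C hμC
  by_contra! h
  obtain ⟨⟨x, hxC, hx⟩, ⟨y, hyC, hy⟩⟩ := And.imp Set.not_subset.mp Set.not_subset.mp h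
  have hbx : b < q x := by simpa [unitInterval.nonneg'] using hx
  have hya : q y < a := by simpa [unitInterval.le_one'] using hy
  have hKC : (K.1 : Set Z) ⊂ C.1 :=
    hK ▸ hqatomic.preimage_Icc_ssubset hqc C.1.isCompact C.2 hab hxC hyC hbx hya
  exact (hμ.2.2 K C hKC).ne (hμK.trans hμC.symm)

/-- Every member of the Whitney level `μ ⁻¹' {s}` lies in `q ⁻¹' [0,b]` or in
`q ⁻¹' [a,1]`. -/
theorem whitney_level_covered {Z : Type*} [MetricSpace Z] [CompactSpace Z]
    [ConnectedSpace Z]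
    (q : Z → unitInterval) (hqc : Continuous q) (hqs : Function.Surjective q)
    (hqmono : ∀ y : unitInterval, IsConnected (q ⁻¹' {y}))
    (hqatomic : IsAtomicMap q)
    (μ : Subcontinua Z → ℝ) (hμ : IsWhitneyMap μ)
    (Ztop : Subcontinua Z) (hZtop : (Ztop.1 : Set Z) = Set.univ)
    (s : ℝ) (hs0 : 0 < s) (hsμ : s < μ Ztop)
    (a b : unitInterval) (ha : 0 < a) (hb : b < 1) (hab : a ≤ b)
    (K : Subcontinua Z) (hK : (K.1 : Set Z) = q ⁻¹' (Set.Icc a b)) (hμK : μ K = s) :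
    ∀ C : Subcontinua Z, μ C = s →
      (C.1 : Set Z) ⊆ q ⁻¹' (Set.Icc 0 b) ∨ (C.1 : Set Z) ⊆ q ⁻¹' (Set.Icc a 1) :=
  whitney_level_covered_general q hqc hqatomic μ hμ s a b hab K hK hμK
end

section
/- Let Z be a continuum, let q : Z → [0,1] be a monotone atomic open continuous surjection with q⁻¹(1) a one-point set and q⁻¹(y) nondegenerate for each y ∈ [0,1), let μ : C(Z) → [0, μ(Z)] be a Whitney map, let s ∈ (0, μ(Z)), and let a, b ∈ (0,1) with a ≤ b satisfy μ(q⁻¹([a,b])) = s. Then each of the sets {C ∈ μ⁻¹(s) : C ⊆ q⁻¹([0,b])} and {C ∈ μ⁻¹(s) : C ⊆ q⁻¹([a,1])} is a nondegenerate subcontinuum of the Whitney level μ⁻¹(s) (i.e., a nonempty compact connected subset of C(Z) containing more than one point). -/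
/-!
Both halves are Whitney levels `{C | μ C = s ∧ C ⊆ M}` of a subcontinuum `M`, namely
`q⁻¹[0, b]` and `q⁻¹[a, 1]` (connected because `q` is a closed map with connected fibres). Each
contains `K = q⁻¹[a, b]`, and a point of `M` off `K` lies in another member, so it suffices that a
Whitney level of a continuum is connected.

The tool is order arcs. Subcontinua are densely ordered by inclusion (boundary bumping), so on a
maximal chain of subcontinua from `A` to `B` the Whitney map is a homeomorphism onto
`[μ A, μ B]`. Hence through every point of `M` passes a member of the level, and two members
`D₁`, `D₂` through a common point `x` are joined inside the level by the connected family of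
unions `γ a ∪ δ b = s` of members of order arcs from `{x}` to `D₁` and to `D₂`.
-/

open TopologicalSpace unitInterval

open Set Topology

section CompactHausdorff

variable {X : Type*} [TopologicalSpace X] [CompactSpace X] [T2Space X]

theorem exists_isClopen_of_connectedComponent_subset {x : X} {U : Set X} (hU : IsOpen U)
    (hxU : connectedComponent x ⊆ U) : ∃ V, IsClopen V ∧ x ∈ V ∧ V ⊆ U := by
  rw [connectedComponent_eq_iInter_isClopen, ← sdiff_eq_empty, sdiff_eq_compl_inter] at hxU
  obtain ⟨t, ht⟩ := hU.isClosed_compl.isCompact.elim_finite_subfamily_closed _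
    (fun V : {V : Set X // IsClopen V ∧ x ∈ V} => V.2.1.isClosed) hxU
  refine ⟨⋂ V ∈ t, V.1, isClopen_biInter_finset fun V _ => V.2.1, mem_iInter₂.2 fun V _ => V.2.2,
    fun y hy => ?_⟩
  by_contra hyU
  exact (ht ▸ mem_inter hyU hy :)

/-- Boundary bumping: in a continuum, the component of a point of a proper closed subset `K`
reaches the boundary of `K`. -/
theorem IsClosed.eq_univ_of_connectedComponentIn_subset_interior [PreconnectedSpace X]
    {K : Set X} (hK : IsClosed K) {x : X} (hx : x ∈ K)
    (hint : connectedComponentIn K x ⊆ interior K) : K = univ := by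
  have : CompactSpace K := isCompact_iff_compactSpace.mp hK.isCompact
  -- a clopen subset of `K` around the component and inside `interior K` is clopen in `X`
  obtain ⟨V, hV, hxV, hVint⟩ := exists_isClopen_of_connectedComponent_subset (x := ⟨x, hx⟩)
    (isOpen_interior.preimage continuous_subtype_val)
    (image_subset_iff.1 (connectedComponentIn_eq_image hx ▸ hint))
  obtain ⟨O, hO, rfl⟩ := isOpen_induced_iff.1 hV.isOpen
  have hVeq : Subtype.val '' (Subtype.val ⁻¹' O : Set K) = O ∩ interior K := by
    ext y
    refine ⟨?_, fun hy => ⟨⟨y, interior_subset hy.2⟩, hy.1, rfl⟩⟩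
    rintro ⟨y, hy, rfl⟩
    exact ⟨hy, hVint hy⟩
  have hclopen : IsClopen (O ∩ interior K) :=
    ⟨hVeq ▸ hK.isClosedEmbedding_subtypeVal.isClosedMap _ hV.isClosed, hO.inter isOpen_interior⟩
  refine eq_univ_of_univ_subset ?_
  rw [← (isClopen_iff.1 hclopen).resolve_left (Nonempty.ne_empty ⟨x, hxV, (hVint hxV :)⟩)]
  exact inter_subset_right.trans interior_subset

end CompactHausdorff

theorem exists_isCompact_isConnected_ssubset_ssubset {X : Type*} [TopologicalSpace X]
    [T2Space X] {A B : Set X} (hA : IsCompact A) (hAc : IsConnected A) (hB : IsCompact B)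
    (hBc : IsPreconnected B) (hAB : A ⊂ B) :
    ∃ C, IsCompact C ∧ IsConnected C ∧ A ⊂ C ∧ C ⊂ B := by
  obtain ⟨b, hbB, hbA⟩ := exists_of_ssubset hAB
  obtain ⟨U, W, hU, hW, hAU, hbW, hUW⟩ := SeparatedNhds.of_isCompact_isCompact hA
    isCompact_singleton (disjoint_singleton_right.2 hbA)
  have hbU : b ∉ closure U := fun h => (hUW.closure_left hW).notMem_of_mem_left h (hbW rfl)
  have : CompactSpace B := isCompact_iff_compactSpace.mp hB
  have : PreconnectedSpace B := Subtype.preconnectedSpace hBc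
  set K : Set B := Subtype.val ⁻¹' closure U
  have hK : IsClosed K := isClosed_closure.preimage continuous_subtype_val
  have hAK : Subtype.val ⁻¹' A ⊆ interior K :=
    (preimage_mono hAU).trans <| (hU.preimage continuous_subtype_val).subset_interior_iff.2
      (preimage_mono subset_closure)
  obtain ⟨a, haA⟩ := hAc.nonempty
  set a' : B := ⟨a, hAB.subset haA⟩
  have haK : a' ∈ K := interior_subset (hAK haA)
  -- boundary bumping: the component of `A` in `K` leaves the interior of `K`, which contains `A`
  obtain ⟨p, hpC, hpK⟩ := not_subset.1 fun h => by
    have hbK : (⟨b, hbB⟩ : B) ∈ K :=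
      hK.eq_univ_of_connectedComponentIn_subset_interior haK h ▸ trivial
    exact hbU hbK
  set C := closure (connectedComponentIn K a')
  have hCK : C ⊆ K := closure_minimal (connectedComponentIn_subset K a') hK
  have hAC : Subtype.val ⁻¹' A ⊆ C := by
    refine subset_closure.trans' (IsPreconnected.subset_connectedComponentIn ?_ haA
      (hAK.trans interior_subset))
    rw [← IsInducing.subtypeVal.isPreconnected_image, Subtype.image_preimage_coe,
      inter_eq_right.2 hAB.subset]
    exact hAc.isPreconnected
  refine ⟨Subtype.val '' C, isClosed_closure.isCompact.image continuous_subtype_val,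
    ((isConnected_connectedComponentIn_iff.2 haK).closure.image _
      continuous_subtype_val.continuousOn), ⟨fun z hz => ⟨⟨z, hAB.subset hz⟩, hAC hz, rfl⟩, ?_⟩,
    ⟨fun _ ⟨z, _, hz⟩ => hz ▸ z.2, ?_⟩⟩
  · exact fun h => hpK (hAK (h (mem_image_of_mem _ (subset_closure hpC))))
  · exact fun h => by
      obtain ⟨z, hzC, hz⟩ := h hbB
      exact hbU (hz ▸ hCK hzC)

theorem IsCompact.isPreconnected_of_fibers {X Y : Type*} [TopologicalSpace X]
    [TopologicalSpace Y] [T2Space Y] {T : Set X} {g : X → Y} (hT : IsCompact T)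
    (hg : ContinuousOn g T) (himg : IsPreconnected (g '' T))
    (hfib : ∀ y, IsPreconnected (T ∩ g ⁻¹' {y})) : IsPreconnected T := by
  refine isPreconnected_closed_iff.2 fun u v hu hv hTuv ⟨x, hxT, hxu⟩ ⟨x', hx'T, hx'v⟩ => ?_
  have himg_closed : ∀ w, IsClosed w → IsClosed (g '' (T ∩ w)) := fun w hw =>
    ((hT.inter_right hw).image_of_continuousOn (hg.mono inter_subset_left)).isClosed
  have himg_cover : g '' T ⊆ g '' (T ∩ u) ∪ g '' (T ∩ v) := by
    rintro _ ⟨w, hwT, rfl⟩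
    exact (hTuv hwT).imp (fun h => ⟨w, ⟨hwT, h⟩, rfl⟩) (fun h => ⟨w, ⟨hwT, h⟩, rfl⟩)
  -- a value taken both on `T ∩ u` and on `T ∩ v` has a fibre meeting `u` and `v`
  obtain ⟨_, -, ⟨z, hz, rfl⟩, ⟨z', hz', hzz'⟩⟩ := isPreconnected_closed_iff.1 himg _ _
    (himg_closed u hu) (himg_closed v hv) himg_cover
    ⟨g x, mem_image_of_mem _ hxT, x, ⟨hxT, hxu⟩, rfl⟩
    ⟨g x', mem_image_of_mem _ hx'T, x', ⟨hx'T, hx'v⟩, rfl⟩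
  obtain ⟨w, ⟨hwT, -⟩, hw⟩ := isPreconnected_closed_iff.1 (hfib (g z)) u v hu hv
    (fun w hw => hTuv hw.1) ⟨z, ⟨hz.1, rfl⟩, hz.2⟩ ⟨z', ⟨hz'.1, hzz'⟩, hz'.2⟩
  exact ⟨w, hwT, hw⟩

theorem isPreconnected_setOf_prod_Icc_apply_eq {f : ℝ × ℝ → ℝ} (hf : Continuous f)
    (hmono : ∀ x, Monotone fun y => f (x, y)) {a₁ b₁ a₂ b₂ t : ℝ} (h₂ : a₂ ≤ b₂)
    (hlow : ∀ x ∈ Icc a₁ b₁, f (x, a₂) ≤ t) (hhigh : ∀ x ∈ Icc a₁ b₁, t ≤ f (x, b₂)) :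
    IsPreconnected {p ∈ Icc a₁ b₁ ×ˢ Icc a₂ b₂ | f p = t} := by
  -- the first projection maps this set onto `[a₁, b₁]`, with interval fibres
  refine IsCompact.isPreconnected_of_fibers (g := Prod.fst)
    ((isCompact_Icc.prod isCompact_Icc).inter_right (isClosed_singleton.preimage hf))
    continuous_fst.continuousOn ?_ fun x => ?_
  · convert isPreconnected_Icc (a := a₁) (b := b₁)
    refine Subset.antisymm (fun _ ⟨p, hp, hpx⟩ => hpx ▸ hp.1.1) fun x hx => ?_
    obtain ⟨y, hy, hfy⟩ := intermediate_value_Icc h₂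
      (hf.comp (Continuous.prodMk_right x)).continuousOn ⟨hlow x hx, hhigh x hx⟩
    exact ⟨(x, y), ⟨⟨hx, hy⟩, hfy⟩, rfl⟩
  · have hslice : {p ∈ Icc a₁ b₁ ×ˢ Icc a₂ b₂ | f p = t} ∩ Prod.fst ⁻¹' {x} =
        (fun y => (x, y)) '' {y | (x, y) ∈ Icc a₁ b₁ ×ˢ Icc a₂ b₂ ∧ f (x, y) = t} := by
      ext ⟨x', y⟩
      simp only [mem_inter_iff, mem_ofPred_eq, mem_preimage, mem_singleton_iff, mem_image,
        Prod.mk.injEq]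
      constructor
      · rintro ⟨hp, rfl⟩; exact ⟨y, hp, rfl, rfl⟩
      · rintro ⟨y', hp, rfl, rfl⟩; exact ⟨hp, rfl⟩
    rw [hslice]
    refine (OrdConnected.isPreconnected ⟨fun y₁ hy₁ y₂ hy₂ y hy => ?_⟩).image _
      (Continuous.prodMk_right x).continuousOn
    refine ⟨⟨hy₁.1.1, hy₁.1.2.1.trans hy.1, hy.2.trans hy₂.1.2.2⟩, le_antisymm ?_ ?_⟩
    · exact hy₂.2 ▸ hmono x hy.2
    · exact hy₁.2 ▸ hmono x hy.1

theorem Flag.isClosed {α : Type*} [PartialOrder α] [TopologicalSpace α] [OrderClosedTopology α]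
    (F : Flag α) : IsClosed (F : Set α) := by
  have hcomparable : IsClosed {p : α × α | p.1 ≤ p.2 ∨ p.2 ≤ p.1} :=
    (isClosed_le continuous_fst continuous_snd).union (isClosed_le continuous_snd continuous_fst)
  have hchain : IsChain (· ≤ ·) (closure (F : Set α)) := by
    intro x hx y hy _
    have hxy : (x, y) ∈ closure ((F : Set α) ×ˢ (F : Set α)) := by
      rw [closure_prod_eq]; exact ⟨hx, hy⟩
    exact closure_minimal (fun p hp => F.le_or_le hp.1 hp.2) hcomparable hxy
  exact (F.maxChain.2 hchain subset_closure).symm ▸ isClosed_closure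

theorem Flag.le_of_apply_le {α β : Type*} [PartialOrder α] [Preorder β] (F : Flag α)
    {μ : α → β} (hμ : StrictMono μ) {a b : α} (ha : a ∈ F) (hb : b ∈ F) (h : μ a ≤ μ b) :
    a ≤ b :=
  (F.le_or_le ha hb).elim id fun hba =>
    hba.eq_or_lt.elim (fun e => e.ge) fun hlt => absurd h (hμ hlt).not_ge

theorem Flag.Icc_subset_image {α : Type*} [PartialOrder α] [DenselyOrdered α]
    [TopologicalSpace α] (F : Flag α) (hF : IsCompact (F : Set α)) {μ : α → ℝ}
    (hμ : StrictMono μ) (hμc : Continuous μ) {a b : α} (ha : a ∈ F) (hb : b ∈ F) :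
    Icc (μ a) (μ b) ⊆ μ '' F := by
  intro r ⟨har, hrb⟩
  by_contra hr
  have hne : ∀ c ∈ F, μ c ≠ r := fun c hc h => hr ⟨c, hc, h⟩
  -- the largest member below `r` and the smallest one above it would leave a gap in `F`
  obtain ⟨c₁, ⟨hc₁, hc₁r⟩, hc₁max⟩ := (hF.inter_right (isClosed_Iic.preimage hμc)).exists_isMaxOn
    ⟨a, ha, har⟩ hμc.continuousOn
  obtain ⟨c₂, ⟨hc₂, hc₂r⟩, hc₂min⟩ := (hF.inter_right (isClosed_Ici.preimage hμc)).exists_isMinOn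
    ⟨b, hb, hrb⟩ hμc.continuousOn
  have hsplit : ∀ c ∈ F, c ≤ c₁ ∨ c₂ ≤ c := fun c hc => (hne c hc).lt_or_gt.imp
    (fun h => F.le_of_apply_le hμ hc hc₁ (isMaxOn_iff.1 hc₁max c ⟨hc, h.le⟩))
    (fun h => F.le_of_apply_le hμ hc₂ hc (isMinOn_iff.1 hc₂min c ⟨hc, h.le⟩))
  have hc₁₂ : c₁ < c₂ := (F.le_of_apply_le hμ hc₁ hc₂ (hc₁r.trans hc₂r)).lt_of_ne
    fun h => hne c₁ hc₁ (le_antisymm hc₁r (h ▸ hc₂r))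
  obtain ⟨g, hc₁g, hgc₂⟩ := exists_between hc₁₂
  have hg : g ∈ F := Flag.mem_iff_forall_le_or_ge.2 fun c hc =>
    (hsplit c hc).symm.imp (fun h => hgc₂.le.trans h) (fun h => h.trans hc₁g.le)
  exact (hsplit g hg).elim (fun h => hc₁g.not_ge h) (fun h => hgc₂.not_ge h)

namespace TopologicalSpace.NonemptyCompacts

variable {α : Type*} [TopologicalSpace α] [T2Space α]

theorem isClosed_setOf_isPreconnected :
    IsClosed {K : NonemptyCompacts α | IsPreconnected (K : Set α)} := by
  refine isOpen_compl_iff.1 (isOpen_iff_forall_mem_open.2 fun K hK => ?_)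
  obtain ⟨u, v, hu, hv, hKuv, huv, hKu, hKv⟩ : ∃ u v, IsClosed u ∧ IsClosed v ∧
      (K : Set α) ⊆ u ∪ v ∧ Disjoint u v ∧ ¬(K : Set α) ⊆ u ∧ ¬(K : Set α) ⊆ v := by
    simpa [isPreconnected_iff_subset_of_fully_disjoint_closed K.isCompact.isClosed] using hK
  obtain ⟨U, V, hU, hV, huU, hvV, hUV⟩ := SeparatedNhds.of_isCompact_isCompact
    (K.isCompact.inter_right hu) (K.isCompact.inter_right hv)
    (huv.mono inter_subset_right inter_subset_right)
  refine ⟨{L | (L : Set α) ⊆ U ∪ V} ∩ {L | ((L : Set α) ∩ U).Nonempty} ∩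
    {L | ((L : Set α) ∩ V).Nonempty}, fun L ⟨⟨hLUV, hLU⟩, hLV⟩ hL => ?_,
    ((isOpen_subsets_of_isOpen (hU.union hV)).inter (isOpen_inter_nonempty_of_isOpen hU)).inter
      (isOpen_inter_nonempty_of_isOpen hV), ⟨⟨fun x hx => ?_, ?_⟩, ?_⟩⟩
  · obtain ⟨x, -, hxU, hxV⟩ := hL U V hU hV hLUV hLU hLV
    exact hUV.notMem_of_mem_left hxU hxV
  · exact (hKuv hx).imp (fun h => huU ⟨hx, h⟩) (fun h => hvV ⟨hx, h⟩)
  · obtain ⟨x, hxK, hxu⟩ := not_subset.1 hKv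
    exact ⟨x, hxK, huU ⟨hxK, (hKuv hxK).resolve_right hxu⟩⟩
  · obtain ⟨x, hxK, hxu⟩ := not_subset.1 hKu
    exact ⟨x, hxK, hvV ⟨hxK, (hKuv hxK).resolve_left hxu⟩⟩

instance : OrderClosedTopology (NonemptyCompacts α) where
  isClosed_le' := by
    refine isOpen_compl_iff.1 (isOpen_iff_forall_mem_open.2 fun ⟨K, L⟩ hKL => ?_)
    obtain ⟨x, hxK, hxL⟩ := not_subset.1 hKL
    obtain ⟨U, V, hU, hV, hxU, hLV, hUV⟩ := SeparatedNhds.of_isCompact_isCompact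
      isCompact_singleton L.isCompact (disjoint_singleton_left.2 hxL)
    refine ⟨{K' : NonemptyCompacts α | ((K' : Set α) ∩ U).Nonempty} ×ˢ
      {L' : NonemptyCompacts α | (L' : Set α) ⊆ V},
      fun ⟨K', L'⟩ ⟨⟨y, hyK', hyU⟩, hL'V⟩ hle => hUV.notMem_of_mem_left hyU (hL'V (hle hyK')),
      (isOpen_inter_nonempty_of_isOpen hU).prod (isOpen_subsets_of_isOpen hV),
      ⟨x, hxK, hxU rfl⟩, hLV⟩

end TopologicalSpace.NonemptyCompacts

namespace Subcontinua

variable {Z : Type*} [MetricSpace Z]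

def mk (C : Set Z) (hC : IsCompact C) (hCc : IsConnected C) : Subcontinua Z :=
  ⟨⟨⟨C, hC⟩, hCc.nonempty⟩, hCc⟩

def singleton (x : Z) : Subcontinua Z := mk {x} isCompact_singleton isConnected_singleton

theorem le_iff {A B : Subcontinua Z} : A ≤ B ↔ (A.1 : Set Z) ⊆ B.1 := Iff.rfl

theorem lt_iff {A B : Subcontinua Z} : A < B ↔ (A.1 : Set Z) ⊂ B.1 := by
  rw [← Subtype.coe_lt_coe, SetLike.coe_ssubset_coe]

theorem singleton_le_iff {x : Z} {A : Subcontinua Z} : singleton x ≤ A ↔ x ∈ (A.1 : Set Z) :=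
  singleton_subset_iff

instance [CompactSpace Z] : CompactSpace (Subcontinua Z) := by
  have : IsCompact {C : NonemptyCompacts Z | IsConnected (C : Set Z)} := by
    simpa [IsConnected, NonemptyCompacts.nonempty] using
      (NonemptyCompacts.isClosed_setOf_isPreconnected (α := Z)).isCompact
  exact isCompact_iff_compactSpace.mp this

instance : DenselyOrdered (Subcontinua Z) where
  dense A B hAB := by
    obtain ⟨C, hC, hCc, hAC, hCB⟩ := exists_isCompact_isConnected_ssubset_ssubset A.1.isCompact A.2
      B.1.isCompact B.2.isPreconnected (lt_iff.1 hAB)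
    exact ⟨mk C hC hCc, lt_iff.2 hAC, lt_iff.2 hCB⟩

theorem isClosed_biUnion_coe {S : Set (Subcontinua Z)} (hS : IsCompact S) :
    IsClosed (⋃ C ∈ S, (C.1 : Set Z)) := by
  rw [← biUnion_image (f := Subtype.val) (g := fun K : NonemptyCompacts Z => (K : Set Z))]
  exact (NonemptyCompacts.isCompact_biUnion_coe_of_isCompact
    (hS.image continuous_subtype_val)).isClosed

end Subcontinua

namespace IsWhitneyMap

variable {Z : Type*} [MetricSpace Z] {μ : Subcontinua Z → ℝ}

theorem continuous (hμ : IsWhitneyMap μ) : Continuous μ := hμ.1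

theorem strictMono (hμ : IsWhitneyMap μ) : StrictMono μ :=
  fun A B h => hμ.2.2 A B (Subcontinua.lt_iff.1 h)

theorem apply_singleton (hμ : IsWhitneyMap μ) (x : Z) : μ (Subcontinua.singleton x) = 0 :=
  hμ.2.1 _ subsingleton_singleton

theorem nonneg (hμ : IsWhitneyMap μ) (A : Subcontinua Z) : 0 ≤ μ A := by
  obtain ⟨x, hx⟩ := A.1.nonempty
  exact hμ.apply_singleton x ▸ hμ.strictMono.monotone (Subcontinua.singleton_le_iff.2 hx)

theorem eq_of_le_of_apply_eq (hμ : IsWhitneyMap μ) {A B : Subcontinua Z} (h : A ≤ B)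
    (h' : μ A = μ B) : A = B :=
  h.eq_of_not_lt fun hlt => (hμ.strictMono hlt).ne h'

variable [CompactSpace Z]

/-- Order arcs: a maximal chain of subcontinua from `A` to `B`, parametrised by `μ`. -/
theorem exists_orderArc (hμ : IsWhitneyMap μ) {A B : Subcontinua Z} (hAB : A ≤ B) :
    ∃ γ : ℝ → Subcontinua Z, Continuous γ ∧ Monotone γ ∧ (∀ r, γ r ∈ Icc A B) ∧
      (∀ r ∈ Icc (μ A) (μ B), μ (γ r) = r) ∧ γ (μ A) = A ∧ γ (μ B) = B := by
  obtain ⟨F, hAF, hBF⟩ := Flag.exists_mem_mem hAB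
  set S : Set (Subcontinua Z) := (F : Set (Subcontinua Z)) ∩ Icc A B
  have : CompactSpace S :=
    isCompact_iff_compactSpace.mp (F.isClosed.isCompact.inter_right isClosed_Icc)
  have hμAB : μ A ≤ μ B := hμ.strictMono.monotone hAB
  have hmem : ∀ {C}, C ∈ F → μ C ∈ Icc (μ A) (μ B) → C ∈ S := fun hC hμC =>
    ⟨hC, F.le_of_apply_le hμ.strictMono hAF hC hμC.1, F.le_of_apply_le hμ.strictMono hC hBF hμC.2⟩
  let e : S ≃ Icc (μ A) (μ B) := Equiv.ofBijective
    (fun C => ⟨μ C, hμ.strictMono.monotone C.2.2.1, hμ.strictMono.monotone C.2.2.2⟩)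
    ⟨fun C D h => Subtype.ext <| le_antisymm
      (F.le_of_apply_le hμ.strictMono C.2.1 D.2.1 (congrArg Subtype.val h).le)
      (F.le_of_apply_le hμ.strictMono D.2.1 C.2.1 (congrArg Subtype.val h).ge),
    fun r => by
      obtain ⟨C, hC, hμC⟩ := F.Icc_subset_image F.isClosed.isCompact hμ.strictMono hμ.continuous
        hAF hBF r.2
      exact ⟨⟨C, hmem hC (hμC ▸ r.2)⟩, Subtype.ext hμC⟩⟩
  let h : S ≃ₜ Icc (μ A) (μ B) :=
    (show Continuous e from (hμ.continuous.comp continuous_subtype_val).subtype_mk _)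
      |>.homeoOfEquivCompactToT2
  set γ : ℝ → Subcontinua Z := fun r => (h.symm (projIcc (μ A) (μ B) hμAB r) : Subcontinua Z)
  have hγ : ∀ r, γ r ∈ Icc A B := fun r => (h.symm _).2.2
  have hμγ : ∀ r, μ (γ r) = projIcc (μ A) (μ B) hμAB r := fun r =>
    congrArg Subtype.val (h.apply_symm_apply _)
  have hμγ' : ∀ r ∈ Icc (μ A) (μ B), μ (γ r) = r := fun r hr => by rw [hμγ, projIcc_of_mem _ hr]
  refine ⟨γ, continuous_subtype_val.comp (h.symm.continuous.comp continuous_projIcc),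
    fun r r' hrr' => ?_, hγ, hμγ',
    (hμ.eq_of_le_of_apply_eq (hγ _).1 (hμγ' _ ⟨le_rfl, hμAB⟩).symm).symm,
    hμ.eq_of_le_of_apply_eq (hγ _).2 (hμγ' _ ⟨hμAB, le_rfl⟩)⟩
  exact F.le_of_apply_le hμ.strictMono (h.symm _).2.1 (h.symm _).2.1
    (by rw [hμγ, hμγ]; exact Subtype.coe_le_coe.2 (monotone_projIcc hμAB hrr'))

theorem exists_mem_Icc_apply_eq (hμ : IsWhitneyMap μ) {A B : Subcontinua Z} (hAB : A ≤ B)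
    {s : ℝ} (hs : s ∈ Icc (μ A) (μ B)) : ∃ C ∈ Icc A B, μ C = s := by
  obtain ⟨γ, -, -, hγAB, hμγ, -⟩ := hμ.exists_orderArc hAB
  exact ⟨γ s, hγAB s, hμγ s hs⟩

/-- The family consists of the unions `γ a ∪ δ b` of size `s`, for order arcs `γ`, `δ` from `{x}`
to `D₁`, `D₂`; their parameters `(a, b)` form a connected subset of the square `[0, s]²`. -/
theorem exists_isPreconnected_joining (hμ : IsWhitneyMap μ) {x : Z} {D₁ D₂ : Subcontinua Z}
    {s : ℝ} (h₁ : x ∈ (D₁.1 : Set Z)) (h₂ : x ∈ (D₂.1 : Set Z)) (hμ₁ : μ D₁ = s)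
    (hμ₂ : μ D₂ = s) :
    ∃ 𝒞 : Set (Subcontinua Z), IsPreconnected 𝒞 ∧ D₁ ∈ 𝒞 ∧ D₂ ∈ 𝒞 ∧
      ∀ C ∈ 𝒞, μ C = s ∧ (C.1 : Set Z) ⊆ D₁.1 ∪ D₂.1 := by
  obtain ⟨γ, hγc, -, hγ, hμγ, hγ0, hγs⟩ :=
    hμ.exists_orderArc (Subcontinua.singleton_le_iff.2 h₁)
  obtain ⟨δ, hδc, hδm, hδ, hμδ, hδ0, hδs⟩ :=
    hμ.exists_orderArc (Subcontinua.singleton_le_iff.2 h₂)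
  rw [hμ.apply_singleton] at hμγ hμδ hγ0 hδ0
  rw [hμ₁] at hμγ hγs
  rw [hμ₂] at hμδ hδs
  have hs : 0 ≤ s := hμ₁ ▸ hμ.nonneg D₁
  have hx : ∀ a b, (((γ a).1 : Set Z) ∩ (δ b).1).Nonempty := fun a b =>
    ⟨x, Subcontinua.singleton_le_iff.1 (hγ a).1, Subcontinua.singleton_le_iff.1 (hδ b).1⟩
  let W : ℝ × ℝ → Subcontinua Z := fun p => ⟨(γ p.1).1 ⊔ (δ p.2).1, by
    rw [NonemptyCompacts.coe_sup]; exact (γ p.1).2.union (hx p.1 p.2) (δ p.2).2⟩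
  have hW : Continuous W := (((continuous_subtype_val.comp (hγc.comp continuous_fst)).sup
    (continuous_subtype_val.comp (hδc.comp continuous_snd)))).subtype_mk _
  have hW_left : ∀ a, W (a, 0) = γ a := fun a =>
    Subtype.ext (sup_eq_left.2 (hδ0 ▸ (hγ a).1 :))
  have hW_right : W (0, s) = D₂ :=
    Subtype.ext <| (sup_eq_right.2 (show γ 0 ≤ δ s by rw [hγ0]; exact (hδ s).1)).trans
      (congrArg Subtype.val hδs)
  have hT := isPreconnected_setOf_prod_Icc_apply_eq (a₁ := 0) (b₁ := s) (t := s)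
    (hμ.continuous.comp hW)
    (fun a b b' hbb' => hμ.strictMono.monotone
      (show W (a, b) ≤ W (a, b') from
        (sup_le_sup_left (hδm hbb') _ : (γ a).1 ⊔ (δ b).1 ≤ (γ a).1 ⊔ (δ b').1))) hs
    (fun a ha => by simp only [Function.comp_apply, hW_left, hμγ a ha, ha.2])
    (fun a _ => (hμδ s ⟨hs, le_rfl⟩).symm.le.trans
      (hμ.strictMono.monotone (show δ s ≤ W (a, s) from
        (le_sup_right : (δ s).1 ≤ (γ a).1 ⊔ (δ s).1))))
  refine ⟨W '' _, hT.image W hW.continuousOn, ⟨(s, 0), ⟨⟨⟨hs, le_rfl⟩, le_rfl, hs⟩, ?_⟩, ?_⟩,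
    ⟨(0, s), ⟨⟨⟨le_rfl, hs⟩, hs, le_rfl⟩, ?_⟩, hW_right⟩, ?_⟩
  · simp only [Function.comp_apply, hW_left, hγs, hμ₁]
  · rw [hW_left, hγs]
  · simp only [Function.comp_apply, hW_right, hμ₂]
  · rintro _ ⟨p, hp, rfl⟩
    refine ⟨hp.2, ?_⟩
    rw [← NonemptyCompacts.coe_sup, SetLike.coe_subset_coe]
    exact sup_le_sup (hγ p.1).2 (hδ p.2).2

theorem isCompact_setOf_apply_eq_le (hμ : IsWhitneyMap μ) (s : ℝ) (M : Subcontinua Z) :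
    IsCompact {C | μ C = s ∧ C ≤ M} :=
  ((isClosed_singleton.preimage hμ.continuous).inter isClosed_Iic).isCompact

/-- A separation `u`, `v` of the level would split `M` into the two closed sets covered by
members of the level in `u` and in `v`; a common point of these lets
`exists_isPreconnected_joining` connect a member in `u` to a member in `v`. -/
theorem isConnected_setOf_apply_eq_le (hμ : IsWhitneyMap μ) {s : ℝ} {M : Subcontinua Z}
    (hs : s ∈ Icc 0 (μ M)) : IsConnected {C | μ C = s ∧ C ≤ M} := by
  set Λ := {C | μ C = s ∧ C ≤ M}
  have hcover : ∀ x ∈ (M.1 : Set Z), ∃ C ∈ Λ, x ∈ (C.1 : Set Z) := fun x hx => by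
    obtain ⟨C, ⟨hxC, hCM⟩, hμC⟩ := hμ.exists_mem_Icc_apply_eq
      (Subcontinua.singleton_le_iff.2 hx) (hμ.apply_singleton x ▸ hs)
    exact ⟨C, ⟨hμC, hCM⟩, Subcontinua.singleton_le_iff.1 hxC⟩
  obtain ⟨x, hx⟩ := M.1.nonempty
  refine ⟨(hcover x hx).imp fun C h => h.1, isPreconnected_closed_iff.2
    fun u v hu hv hΛuv ⟨D₁, hD₁, hD₁u⟩ ⟨D₂, hD₂, hD₂v⟩ => ?_⟩
  have hclosed : ∀ w, IsClosed w → IsClosed (⋃ C ∈ Λ ∩ w, (C.1 : Set Z)) := fun w hw =>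
    Subcontinua.isClosed_biUnion_coe ((hμ.isCompact_setOf_apply_eq_le s M).inter_right hw)
  have hmeets : ∀ {D w}, D ∈ Λ → D ∈ w → ((M.1 : Set Z) ∩ ⋃ C ∈ Λ ∩ w, (C.1 : Set Z)).Nonempty :=
    fun {D _} hD hDw =>
      let ⟨y, hy⟩ := D.1.nonempty
      ⟨y, hD.2 hy, mem_biUnion ⟨hD, hDw⟩ hy⟩
  obtain ⟨y, -, hyu, hyv⟩ := isPreconnected_closed_iff.1 M.2.isPreconnected _ _
    (hclosed u hu) (hclosed v hv) (fun y hy => by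
      obtain ⟨C, hC, hyC⟩ := hcover y hy
      exact (hΛuv hC).imp (fun h => mem_biUnion ⟨hC, h⟩ hyC) (fun h => mem_biUnion ⟨hC, h⟩ hyC))
    (hmeets hD₁ hD₁u) (hmeets hD₂ hD₂v)
  obtain ⟨C₁, ⟨hC₁, hC₁u⟩, hyC₁⟩ := mem_iUnion₂.1 hyu
  obtain ⟨C₂, ⟨hC₂, hC₂v⟩, hyC₂⟩ := mem_iUnion₂.1 hyv
  obtain ⟨𝒞, h𝒞, hC₁𝒞, hC₂𝒞, h𝒞Λ⟩ := hμ.exists_isPreconnected_joining hyC₁ hyC₂ hC₁.1 hC₂.1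
  have h𝒞Λ' : 𝒞 ⊆ Λ := fun C hC => ⟨(h𝒞Λ C hC).1, (h𝒞Λ C hC).2.trans (union_subset hC₁.2 hC₂.2)⟩
  obtain ⟨C, hC, hCuv⟩ := isPreconnected_closed_iff.1 h𝒞 u v hu hv (h𝒞Λ'.trans hΛuv)
    ⟨C₁, hC₁𝒞, hC₁u⟩ ⟨C₂, hC₂𝒞, hC₂v⟩
  exact ⟨C, h𝒞Λ' hC, hCuv⟩

theorem nontrivial_setOf_apply_eq_le (hμ : IsWhitneyMap μ) {K M : Subcontinua Z} (hKM : K ≤ M)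
    {x : Z} (hxM : x ∈ (M.1 : Set Z)) (hxK : x ∉ (K.1 : Set Z)) :
    {C | μ C = μ K ∧ C ≤ M}.Nontrivial := by
  obtain ⟨C, ⟨hxC, hCM⟩, hμC⟩ := hμ.exists_mem_Icc_apply_eq (Subcontinua.singleton_le_iff.2 hxM)
    ⟨(hμ.apply_singleton x).trans_le (hμ.nonneg K), hμ.strictMono.monotone hKM⟩
  exact ⟨C, ⟨hμC, hCM⟩, K, ⟨rfl, hKM⟩, fun h => hxK (h ▸ Subcontinua.singleton_le_iff.1 hxC)⟩

end IsWhitneyMap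

theorem whitney_level_halves_are_continua_general {Z : Type*} [MetricSpace Z] [CompactSpace Z]
    (q : Z → unitInterval) (hqc : Continuous q) (hqs : Function.Surjective q)
    (hqmono : ∀ y : unitInterval, IsConnected (q ⁻¹' {y}))
    (μ : Subcontinua Z → ℝ) (hμ : IsWhitneyMap μ)
    (s : ℝ)
    (a b : unitInterval) (ha : 0 < a) (hb : b < 1)
    (K : Subcontinua Z) (hK : (K.1 : Set Z) = q ⁻¹' (Set.Icc a b)) (hμK : μ K = s) :
    (IsCompact {C : Subcontinua Z | μ C = s ∧ (C.1 : Set Z) ⊆ q ⁻¹' (Set.Icc 0 b)} ∧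
      IsConnected {C : Subcontinua Z | μ C = s ∧ (C.1 : Set Z) ⊆ q ⁻¹' (Set.Icc 0 b)} ∧
      Set.Nontrivial {C : Subcontinua Z | μ C = s ∧ (C.1 : Set Z) ⊆ q ⁻¹' (Set.Icc 0 b)}) ∧
    (IsCompact {C : Subcontinua Z | μ C = s ∧ (C.1 : Set Z) ⊆ q ⁻¹' (Set.Icc a 1)} ∧
      IsConnected {C : Subcontinua Z | μ C = s ∧ (C.1 : Set Z) ⊆ q ⁻¹' (Set.Icc a 1)} ∧
      Set.Nontrivial {C : Subcontinua Z | μ C = s ∧ (C.1 : Set Z) ⊆ q ⁻¹' (Set.Icc a 1)}) := by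
  subst hμK
  have half : ∀ {c d : unitInterval}, c ≤ d → Icc a b ⊆ Icc c d → (Icc c d \ Icc a b).Nonempty →
      IsCompact {C : Subcontinua Z | μ C = μ K ∧ (C.1 : Set Z) ⊆ q ⁻¹' Icc c d} ∧
      IsConnected {C : Subcontinua Z | μ C = μ K ∧ (C.1 : Set Z) ⊆ q ⁻¹' Icc c d} ∧
      Set.Nontrivial {C : Subcontinua Z | μ C = μ K ∧ (C.1 : Set Z) ⊆ q ⁻¹' Icc c d} := by
    intro c d hcd habcd ⟨y, hycd, hyab⟩
    let M := Subcontinua.mk (q ⁻¹' Icc c d) (isClosed_Icc.preimage hqc).isCompact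
      ((IsQuotientMap.of_surjective_continuous hqs hqc).isCoinducing
        |>.isConnected_preimage_of_isClosed hqmono isClosed_Icc (isConnected_Icc hcd))
    have hKM : K ≤ M := Subcontinua.le_iff.2 (hK ▸ preimage_mono habcd)
    obtain ⟨x, rfl⟩ := hqs y
    exact ⟨hμ.isCompact_setOf_apply_eq_le (μ K) M,
      hμ.isConnected_setOf_apply_eq_le ⟨hμ.nonneg K, hμ.strictMono.monotone hKM⟩,
      hμ.nontrivial_setOf_apply_eq_le hKM hycd (hK ▸ hyab)⟩
  exact ⟨half nonneg' (Icc_subset_Icc_left nonneg') ⟨0, ⟨le_rfl, nonneg'⟩, fun h => ha.not_ge h.1⟩,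
    half le_one' (Icc_subset_Icc_right le_one') ⟨1, ⟨le_one', le_rfl⟩, fun h => hb.not_ge h.2⟩⟩

/-- Each of the two halves of the Whitney level `μ ⁻¹' {s}` is a nondegenerate
subcontinuum of the Whitney level (nonempty, compact, connected and with more than one
point, as a subset of `C(Z)`). -/
theorem whitney_level_halves_are_continua {Z : Type*} [MetricSpace Z] [CompactSpace Z]
    [ConnectedSpace Z]
    (q : Z → unitInterval) (hqc : Continuous q) (hqs : Function.Surjective q)
    (hqmono : ∀ y : unitInterval, IsConnected (q ⁻¹' {y}))
    (hqatomic : IsAtomicMap q)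
    (hqopen : IsOpenMap q)
    (h1 : ∃ z : Z, q ⁻¹' {1} = {z})
    (hfib : ∀ y : unitInterval, y < 1 → (q ⁻¹' {y}).Nontrivial)
    (μ : Subcontinua Z → ℝ) (hμ : IsWhitneyMap μ)
    (Ztop : Subcontinua Z) (hZtop : (Ztop.1 : Set Z) = Set.univ)
    (s : ℝ) (hs0 : 0 < s) (hsμ : s < μ Ztop)
    (a b : unitInterval) (ha : 0 < a) (hb : b < 1) (hab : a ≤ b)
    (K : Subcontinua Z) (hK : (K.1 : Set Z) = q ⁻¹' (Set.Icc a b)) (hμK : μ K = s) :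
    (IsCompact {C : Subcontinua Z | μ C = s ∧ (C.1 : Set Z) ⊆ q ⁻¹' (Set.Icc 0 b)} ∧
      IsConnected {C : Subcontinua Z | μ C = s ∧ (C.1 : Set Z) ⊆ q ⁻¹' (Set.Icc 0 b)} ∧
      Set.Nontrivial {C : Subcontinua Z | μ C = s ∧ (C.1 : Set Z) ⊆ q ⁻¹' (Set.Icc 0 b)}) ∧
    (IsCompact {C : Subcontinua Z | μ C = s ∧ (C.1 : Set Z) ⊆ q ⁻¹' (Set.Icc a 1)} ∧
      IsConnected {C : Subcontinua Z | μ C = s ∧ (C.1 : Set Z) ⊆ q ⁻¹' (Set.Icc a 1)} ∧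
      Set.Nontrivial {C : Subcontinua Z | μ C = s ∧ (C.1 : Set Z) ⊆ q ⁻¹' (Set.Icc a 1)}) :=
  whitney_level_halves_are_continua_general q hqc hqs hqmono μ hμ s a b ha hb K hK hμK
end

section
/- Let Z be a continuum, let q : Z → [0,1] be a monotone atomic open continuous surjection with q⁻¹(1) a one-point set and q⁻¹(y) nondegenerate for each y ∈ [0,1), let μ : C(Z) → [0, μ(Z)] be a Whitney map, let s ∈ (0, μ(Z)), and let a, b ∈ (0,1) with a ≤ b satisfy μ(q⁻¹([a,b])) = s. Then the point q⁻¹([a,b]) of the Whitney level μ⁻¹(s) is a cut-point of μ⁻¹(s): the set μ⁻¹(s) \ {q⁻¹([a,b])} is disconnected in the subspace topology induced from C(Z). -/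
open TopologicalSpace unitInterval

section Aux

open Metric Set

variable {Z : Type*} [MetricSpace Z]

lemma aux_edist_ne_top (C D : NonemptyCompacts Z) :
    EMetric.hausdorffEdist (C : Set Z) (D : Set Z) ≠ ⊤ :=
  Metric.hausdorffEdist_ne_top_of_nonempty_of_bounded C.nonempty D.nonempty
    C.isCompact.isBounded D.isCompact.isBounded

lemma continuous_sup_image [CompactSpace Z] {g : Z → ℝ} (hg : Continuous g) :
    Continuous (fun C : NonemptyCompacts Z => sSup (g '' (C : Set Z))) := by
  rw [Metric.continuous_iff]
  intro D ε hε
  obtain ⟨δ, hδ, hmod⟩ := Metric.uniformContinuous_iff.mp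
    (CompactSpace.uniformContinuous_of_continuous hg) (ε/2) (by linarith)
  refine ⟨δ, hδ, fun C hCD => ?_⟩
  have key : ∀ A B : NonemptyCompacts Z, dist A B < δ →
      sSup (g '' (A : Set Z)) ≤ sSup (g '' (B : Set Z)) + ε/2 := by
    intro A B hAB
    apply csSup_le (A.nonempty.image g)
    rintro _ ⟨x, hx, rfl⟩
    obtain ⟨y, hy, hxy⟩ := Metric.exists_dist_lt_of_hausdorffDist_lt hx
      (by rw [← NonemptyCompacts.dist_eq]; exact hAB) (aux_edist_ne_top A B)
    have h1 : dist (g x) (g y) < ε/2 := hmod hxy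
    have h2 : g y ≤ sSup (g '' (B : Set Z)) :=
      le_csSup (B.isCompact.image hg).bddAbove ⟨y, hy, rfl⟩
    rw [Real.dist_eq, abs_sub_lt_iff] at h1
    linarith [h1.1]
  have h1 := key C D hCD
  have h2 := key D C (by rwa [dist_comm])
  rw [Real.dist_eq, abs_sub_lt_iff]
  constructor <;> linarith

lemma isClosed_setOf_isConnected :
    IsClosed {C : NonemptyCompacts Z | IsConnected (C : Set Z)} := by
  apply IsSeqClosed.isClosed
  intro Cn C hCn hlim
  refine ⟨C.nonempty, ?_⟩
  intro U V hU hV hUV hCU hCV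
  by_contra hne
  rw [Set.not_nonempty_iff_eq_empty] at hne
  have hdisj : ∀ x ∈ (C : Set Z), x ∈ U → x ∈ V → False := fun x hx h1 h2 =>
    Set.eq_empty_iff_forall_notMem.mp hne x ⟨hx, h1, h2⟩
  set A : Set Z := (C : Set Z) ∩ Vᶜ with hA
  set B : Set Z := (C : Set Z) ∩ Uᶜ with hB
  have hAcomp : IsCompact A := C.isCompact.inter_right hV.isClosed_compl
  have hBcomp : IsCompact B := C.isCompact.inter_right hU.isClosed_compl
  have hCAB : (C : Set Z) = A ∪ B := by
    apply Set.Subset.antisymm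
    · intro x hx
      rcases hUV hx with h | h
      · exact Or.inl ⟨hx, fun hv => hdisj x hx h hv⟩
      · exact Or.inr ⟨hx, fun hu => hdisj x hx hu h⟩
    · rintro x (⟨hx, _⟩ | ⟨hx, _⟩) <;> exact hx
  have hABdisj : Disjoint A B := by
    rw [Set.disjoint_left]
    rintro x ⟨hxC, hxV⟩ ⟨_, hxU⟩
    rcases hUV hxC with h | h
    · exact hxU h
    · exact hxV h
  obtain ⟨δ, hδ, hTdisj⟩ := hABdisj.exists_thickenings hAcomp hBcomp.isClosed
  obtain ⟨N, hN⟩ := Metric.tendsto_atTop.mp hlim δ hδ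
  have hdist : hausdorffDist ((Cn N : Set Z)) (C : Set Z) < δ := by
    rw [← NonemptyCompacts.dist_eq]; exact hN N le_rfl
  have hsub : (Cn N : Set Z) ⊆ thickening δ A ∪ thickening δ B := by
    intro x hx
    obtain ⟨y, hy, hxy⟩ := Metric.exists_dist_lt_of_hausdorffDist_lt hx hdist
      (aux_edist_ne_top (Cn N) C)
    rw [hCAB] at hy
    rcases hy with h | h
    · exact Or.inl (Metric.mem_thickening_iff.mpr ⟨y, h, hxy⟩)
    · exact Or.inr (Metric.mem_thickening_iff.mpr ⟨y, h, hxy⟩)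
  have hmeet : ∀ D' : Set Z, D' ⊆ (C : Set Z) → D'.Nonempty →
      ((Cn N : Set Z) ∩ thickening δ D').Nonempty := by
    rintro D' hD' ⟨d, hd⟩
    obtain ⟨x, hx, hxd⟩ := Metric.exists_dist_lt_of_hausdorffDist_lt (hD' hd)
      (by rwa [hausdorffDist_comm]) (aux_edist_ne_top C (Cn N))
    exact ⟨x, hx, Metric.mem_thickening_iff.mpr ⟨d, hd, by rwa [dist_comm] at hxd⟩⟩
  have hAne : A.Nonempty := by
    obtain ⟨x, hxC, hxU⟩ := hCU
    exact ⟨x, hxC, fun hv => hdisj x hxC hxU hv⟩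
  have hBne : B.Nonempty := by
    obtain ⟨x, hxC, hxV⟩ := hCV
    exact ⟨x, hxC, fun hu => hdisj x hxC hu hxV⟩
  obtain ⟨x, hx1, hx2, hx3⟩ := (hCn N).2 (thickening δ A) (thickening δ B)
    isOpen_thickening isOpen_thickening hsub
    (hmeet A (fun x hx => hx.1) hAne) (hmeet B (fun x hx => hx.1) hBne)
  exact Set.disjoint_left.mp hTdisj hx2 hx3

lemma isClosed_setOf_mem (p : Z) : IsClosed {C : NonemptyCompacts Z | p ∈ (C : Set Z)} := by
  apply IsSeqClosed.isClosed
  intro Cn C hCn hlim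
  have h0 : infDist p (C : Set Z) ≤ 0 := by
    apply le_of_forall_pos_le_add
    intro ε hε
    obtain ⟨N, hN⟩ := Metric.tendsto_atTop.mp hlim ε hε
    have := Metric.infDist_le_infDist_add_hausdorffDist
      (x := p) (s := (Cn N : Set Z)) (t := (C : Set Z)) (aux_edist_ne_top (Cn N) C)
    have hm : p ∈ ((Cn N : NonemptyCompacts Z) : Set Z) := hCn N
    rw [Metric.infDist_zero_of_mem hm] at this
    have h2 : hausdorffDist ((Cn N : Set Z)) (C : Set Z) < ε := by
      rw [← NonemptyCompacts.dist_eq]; exact hN N le_rfl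
    linarith
  exact (C.isCompact.isClosed.mem_iff_infDist_zero C.nonempty).mpr
    (le_antisymm h0 Metric.infDist_nonneg)

lemma exists_bigger_continuum [CompactSpace Z] [ConnectedSpace Z]
    {C₀ : Set Z} (hconn : IsConnected C₀)
    {ε : ℝ} (hε : 0 < ε) {w : Z} (hw : ε < infDist w C₀) :
    ∃ E : Set Z, IsCompact E ∧ IsConnected E ∧ C₀ ⊆ E ∧ E ≠ C₀ ∧
      ∀ x ∈ E, infDist x C₀ ≤ ε := by
  obtain ⟨p, hp⟩ := hconn.nonempty
  set N : Set Z := {x | infDist x C₀ ≤ ε} with hNdef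
  have hcont : Continuous fun x : Z => infDist x C₀ := continuous_infDist_pt _
  have hNclosed : IsClosed N := isClosed_le hcont continuous_const
  have hNcomp : IsCompact N := hNclosed.isCompact
  have hpN : p ∈ N := by
    show infDist p C₀ ≤ ε
    rw [infDist_zero_of_mem hp]; exact hε.le
  have hC₀N : C₀ ⊆ N := fun x hx => by
    show infDist x C₀ ≤ ε
    rw [infDist_zero_of_mem hx]; exact hε.le
  set E : Set Z := connectedComponentIn N p with hEdef
  have hC₀E : C₀ ⊆ E := hconn.isPreconnected.subset_connectedComponentIn hp hC₀N
  have hEconn : IsConnected E := isConnected_connectedComponentIn_iff.mpr hpN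
  have hNc : CompactSpace N := isCompact_iff_compactSpace.mp hNcomp
  have hEimg : E = Subtype.val '' connectedComponent (⟨p, hpN⟩ : N) :=
    connectedComponentIn_eq_image hpN
  have hEcomp : IsCompact E := by
    rw [hEimg]
    exact (isClosed_connectedComponent.isCompact).image continuous_subtype_val
  have hEN : E ⊆ N := connectedComponentIn_subset _ _
  set D : Set Z := {x | infDist x C₀ = ε} with hDdef
  have hDne : D.Nonempty := by
    have hmem : ε ∈ Icc (infDist p C₀) (infDist w C₀) := by
      rw [infDist_zero_of_mem hp]; exact ⟨hε.le, hw.le⟩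
    obtain ⟨d, hd⟩ := intermediate_value_univ p w hcont hmem
    exact ⟨d, hd⟩
  have hDclosed : IsClosed D := isClosed_eq hcont continuous_const
  by_cases hED : (E ∩ D).Nonempty
  · obtain ⟨x, hxE, hxD⟩ := hED
    refine ⟨E, hEcomp, hEconn, hC₀E, ?_, fun x hx => hEN hx⟩
    intro heq
    have hx0 : infDist x C₀ = 0 := infDist_zero_of_mem (heq ▸ hxE)
    have : infDist x C₀ = ε := hxD
    exact hε.ne' (by rw [← hx0, this])
  · exfalso
    set p' : N := ⟨p, hpN⟩ with hp'def
    set D' : Set N := Subtype.val ⁻¹' D with hD'def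
    have hD'comp : IsCompact D' :=
      (hDclosed.preimage continuous_subtype_val).isCompact
    have hcover : D' ⊆ ⋃ s : {s : Set N // IsClopen s ∧ p' ∈ s}, (↑s : Set N)ᶜ := by
      intro x hx
      by_contra hxU
      simp only [Set.mem_iUnion, Set.mem_compl_iff, not_exists, not_not] at hxU
      have hxcc : x ∈ connectedComponent p' := by
        rw [connectedComponent_eq_iInter_isClopen p']
        exact Set.mem_iInter.mpr hxU
      exact hED ⟨(x : Z), hEimg ▸ ⟨x, hxcc, rfl⟩, hx⟩
    obtain ⟨t, ht⟩ := hD'comp.elim_finite_subcover _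
      (fun s => s.2.1.compl.isOpen) hcover
    set W : Set N := ⋂ s ∈ t, (s : Set N) with hWdef
    have hWclopen : IsClopen W := isClopen_biInter_finset (fun s _ => s.2.1)
    have hpW : p' ∈ W := Set.mem_iInter₂.mpr fun s _ => s.2.2
    have hWD' : ∀ x ∈ W, x ∉ D' := by
      intro x hxW hxD'
      obtain ⟨s, hst, hxs⟩ := Set.mem_iUnion₂.mp (ht hxD')
      exact hxs (Set.mem_iInter₂.mp hxW s hst)
    set Wz : Set Z := Subtype.val '' W with hWzdef
    have hWzclosed : IsClosed Wz :=
      ((hWclopen.isClosed.isCompact).image continuous_subtype_val).isClosed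
    have hWzlt : ∀ x ∈ Wz, infDist x C₀ < ε := by
      rintro _ ⟨x, hxW, rfl⟩
      have h1 : infDist (x : Z) C₀ ≤ ε := x.2
      have h2 : infDist (x : Z) C₀ ≠ ε := fun h => hWD' x hxW h
      exact lt_of_le_of_ne h1 h2
    obtain ⟨O, hO, hOW⟩ := isOpen_induced_iff.mp hWclopen.isOpen
    have hWzopen : IsOpen Wz := by
      have : Wz = O ∩ {x | infDist x C₀ < ε} := by
        apply Set.Subset.antisymm
        · rintro _ ⟨x, hxW, rfl⟩
          refine ⟨?_, hWzlt _ ⟨x, hxW, rfl⟩⟩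
          have : x ∈ Subtype.val ⁻¹' O := hOW ▸ hxW
          exact this
        · rintro x ⟨hxO, hxlt⟩
          have hxN : x ∈ N := show infDist x C₀ ≤ ε from le_of_lt hxlt
          refine ⟨⟨x, hxN⟩, ?_, rfl⟩
          rw [← hOW]
          exact hxO
      rw [this]
      exact hO.inter (isOpen_lt hcont continuous_const)
    have : Wz = ∅ ∨ Wz = Set.univ := isClopen_iff.mp ⟨hWzclosed, hWzopen⟩
    rcases this with h | h
    · exact absurd (h ▸ ⟨p', hpW, rfl⟩ : (p : Z) ∈ (∅ : Set Z)) (Set.notMem_empty _)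
    · obtain ⟨d, hd⟩ := hDne
      have : infDist d C₀ < ε := hWzlt d (h ▸ Set.mem_univ d)
      exact this.ne hd

lemma subcontinua_ext {C D : Subcontinua Z} (h : (C.1 : Set Z) = (D.1 : Set Z)) : C = D :=
  Subtype.ext (NonemptyCompacts.ext h)

lemma exists_whitney_point [CompactSpace Z] [ConnectedSpace Z]
    (μ : Subcontinua Z → ℝ) (hμ : IsWhitneyMap μ)
    (Ztop : Subcontinua Z) (hZtop : (Ztop.1 : Set Z) = Set.univ)
    {s : ℝ} (hs0 : 0 ≤ s) (hsμ : s < μ Ztop) (p : Z) :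
    ∃ C : Subcontinua Z, p ∈ (C.1 : Set Z) ∧ μ C = s := by
  obtain ⟨hcont, hsing, hstrict⟩ := hμ
  haveI : CompactSpace (Subcontinua Z) :=
    isCompact_iff_compactSpace.mp (isClosed_setOf_isConnected (Z := Z)).isCompact
  set 𝒯 : Set (Subcontinua Z) := {C | p ∈ (C.1 : Set Z) ∧ μ C ≤ s} with h𝒯
  have h𝒯closed : IsClosed 𝒯 := by
    apply IsClosed.inter
    · exact (isClosed_setOf_mem p).preimage continuous_subtype_val
    · exact isClosed_le hcont continuous_const
  have h𝒯comp : IsCompact 𝒯 := h𝒯closed.isCompact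
  set Cp : Subcontinua Z :=
    ⟨⟨⟨{p}, isCompact_singleton⟩, Set.singleton_nonempty p⟩, isConnected_singleton⟩ with hCp
  have h𝒯ne : 𝒯.Nonempty := by
    refine ⟨Cp, rfl, ?_⟩
    rw [hsing Cp Set.subsingleton_singleton]; exact hs0
  obtain ⟨C₀, hC₀mem, hC₀max⟩ := h𝒯comp.exists_isMaxOn h𝒯ne hcont.continuousOn
  by_cases heq : μ C₀ = s
  · exact ⟨C₀, hC₀mem.1, heq⟩
  have hlt : μ C₀ < s := lt_of_le_of_ne hC₀mem.2 heq
  have hC₀ne : (C₀.1 : Set Z) ≠ Set.univ := by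
    intro h
    have : C₀ = Ztop := subcontinua_ext (by rw [h, hZtop])
    rw [this] at hlt
    exact absurd hsμ (not_lt.mpr hlt.le)
  obtain ⟨w, hw⟩ := (Set.ne_univ_iff_exists_notMem _).mp hC₀ne
  have hdw : 0 < infDist w (C₀.1 : Set Z) := by
    rcases lt_or_eq_of_le (Metric.infDist_nonneg (x := w) (s := (C₀.1 : Set Z))) with h | h
    · exact h
    · exact absurd ((C₀.1.isCompact.isClosed.mem_iff_infDist_zero C₀.1.nonempty).mpr h.symm) hw
  obtain ⟨δ, hδ, hδmod⟩ := Metric.continuous_iff.mp hcont C₀ (s - μ C₀) (by linarith)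
  set ε : ℝ := min (δ/2) (infDist w (C₀.1 : Set Z) / 2) with hε
  have hεpos : 0 < ε := lt_min (by linarith) (by linarith)
  have hεw : ε < infDist w (C₀.1 : Set Z) :=
    lt_of_le_of_lt (min_le_right _ _) (by linarith)
  obtain ⟨E, hEcomp, hEconn, hC₀E, hEne, hEdist⟩ :=
    exists_bigger_continuum C₀.2 hεpos hεw
  set Esub : Subcontinua Z := ⟨⟨⟨E, hEcomp⟩, hEconn.nonempty⟩, hEconn⟩ with hEsub
  have hdistE : dist Esub C₀ ≤ ε := by
    rw [Subtype.dist_eq, NonemptyCompacts.dist_eq]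
    apply Metric.hausdorffDist_le_of_mem_dist hεpos.le
    · intro x hx
      obtain ⟨y, hy, hxy⟩ := C₀.1.isCompact.exists_infDist_eq_dist C₀.1.nonempty x
      exact ⟨y, hy, by rw [← hxy]; exact hEdist x hx⟩
    · intro x hx
      exact ⟨x, hC₀E hx, by rw [dist_self]; exact hεpos.le⟩
  have hμE : μ Esub < s := by
    have := hδmod Esub (lt_of_le_of_lt hdistE (lt_of_le_of_lt (min_le_left _ _) (by linarith)))
    rw [Real.dist_eq, abs_sub_lt_iff] at this
    linarith [this.1]
  have hssub : (C₀.1 : Set Z) ⊂ (Esub.1 : Set Z) :=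
    ⟨hC₀E, fun h => hEne (show E = _ from Set.Subset.antisymm h hC₀E)⟩
  have hμlt : μ C₀ < μ Esub := hstrict C₀ Esub hssub
  have : μ Esub ≤ μ C₀ := hC₀max ⟨hC₀E hC₀mem.1, hμE.le⟩
  linarith

end Aux

open Metric Set

/-- The point `q ⁻¹' [a,b]` is a cut-point of the Whitney level `μ ⁻¹' {s}`:
removing it disconnects the level (in the subspace topology induced from `C(Z)`). -/
theorem whitney_level_has_cut_point {Z : Type*} [MetricSpace Z] [CompactSpace Z]
    [ConnectedSpace Z]
    (q : Z → unitInterval) (hqc : Continuous q) (hqs : Function.Surjective q)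
    (hqmono : ∀ y : unitInterval, IsConnected (q ⁻¹' {y}))
    (hqatomic : IsAtomicMap q)
    (hqopen : IsOpenMap q)
    (h1 : ∃ z : Z, q ⁻¹' {1} = {z})
    (hfib : ∀ y : unitInterval, y < 1 → (q ⁻¹' {y}).Nontrivial)
    (μ : Subcontinua Z → ℝ) (hμ : IsWhitneyMap μ)
    (Ztop : Subcontinua Z) (hZtop : (Ztop.1 : Set Z) = Set.univ)
    (s : ℝ) (hs0 : 0 < s) (hsμ : s < μ Ztop)
    (a b : unitInterval) (ha : 0 < a) (hb : b < 1) (hab : a ≤ b)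
    (K : Subcontinua Z) (hK : (K.1 : Set Z) = q ⁻¹' (Set.Icc a b)) (hμK : μ K = s) :
    ¬ IsPreconnected ({C : Subcontinua Z | μ C = s} \ {K}) := by
  intro hpre
  obtain ⟨hcont, hsing, hstrict⟩ := hμ
  set g : Z → ℝ := fun z => (q z : ℝ) with hgdef
  have hgc : Continuous g := continuous_subtype_val.comp hqc
  set F : Subcontinua Z → ℝ := fun C => sSup (g '' (C.1 : Set Z)) with hFdef
  have hFc : Continuous F := (continuous_sup_image hgc).comp continuous_subtype_val
  have hcoe0 : ((0 : unitInterval) : ℝ) = 0 := rfl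
  have hcoe1 : ((1 : unitInterval) : ℝ) = 1 := rfl
  have hmaxx : ∀ C : Subcontinua Z, ∃ zM ∈ (C.1 : Set Z),
      (∀ z ∈ (C.1 : Set Z), g z ≤ g zM) ∧ F C = g zM := by
    intro C
    obtain ⟨zM, hzM, hM⟩ := C.1.isCompact.exists_isMaxOn C.1.nonempty hgc.continuousOn
    refine ⟨zM, hzM, isMaxOn_iff.mp hM, ?_⟩
    exact IsGreatest.csSup_eq
      ⟨⟨zM, hzM, rfl⟩, by rintro _ ⟨z, hz, rfl⟩; exact isMaxOn_iff.mp hM z hz⟩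
  have hsubK : ∀ C : Subcontinua Z, μ C = s → (C.1 : Set Z) ⊆ (K.1 : Set Z) → C = K := by
    intro C hμC hsub
    rcases eq_or_ne C K with h | h
    · exact h
    · exfalso
      have hne : (C.1 : Set Z) ≠ (K.1 : Set Z) := fun hh => h (subcontinua_ext hh)
      have := hstrict C K ⟨hsub, fun hh => hne (Set.Subset.antisymm hsub hh)⟩
      rw [hμC, hμK] at this; exact lt_irrefl s this
  have hsupK : ∀ C : Subcontinua Z, μ C = s → (K.1 : Set Z) ⊂ (C.1 : Set Z) → False := by
    intro C hμC hsub
    have := hstrict K C hsub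
    rw [hμC, hμK] at this; exact lt_irrefl s this
  have hclaim : ∀ C : Subcontinua Z, μ C = s → F C = (b : ℝ) → C = K := by
    intro C hμC hFC
    obtain ⟨zM, hzM, hub, hFeq⟩ := hmaxx C
    have hgzM : g zM = (b : ℝ) := by rw [← hFeq, hFC]
    have hqzM : q zM = b := Subtype.coe_injective hgzM
    rcases Set.subsingleton_or_nontrivial (q '' (C.1 : Set Z)) with hss | hnt
    · apply hsubK C hμC
      intro x hx
      have hxx : q x = q zM := hss ⟨x, hx, rfl⟩ ⟨zM, hzM, rfl⟩
      rw [hK]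
      show q x ∈ Icc a b
      rw [hxx, hqzM]
      exact ⟨hab, le_refl b⟩
    · have hatom := hqatomic (C.1 : Set Z) C.1.isCompact C.2 hnt
      have hord := ((C.2.image g hgc.continuousOn).isPreconnected).ordConnected
      by_cases hsub : q '' (C.1 : Set Z) ⊆ Icc a b
      · apply hsubK C hμC
        intro x hx
        rw [hK]
        exact hsub ⟨x, hx, rfl⟩
      · exfalso
        obtain ⟨y, hyC, hy⟩ := not_subset.mp hsub
        obtain ⟨zy, hzy, hzyq⟩ := hyC
        have hyb : (y : ℝ) ≤ (b : ℝ) := by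
          rw [← hgzM, ← hzyq]; exact hub zy hzy
        have hya : (y : ℝ) < (a : ℝ) := by
          by_contra hge
          exact hy ⟨Subtype.coe_le_coe.mp (not_lt.mp hge), Subtype.coe_le_coe.mp hyb⟩
        have hKC : (K.1 : Set Z) ⊆ (C.1 : Set Z) := by
          rw [hK, ← hatom]
          intro x hx
          have hx' : q x ∈ Icc a b := hx
          have h1 : (y : ℝ) ∈ g '' (C.1 : Set Z) := ⟨zy, hzy, congrArg Subtype.val hzyq⟩
          have h2 : (b : ℝ) ∈ g '' (C.1 : Set Z) := ⟨zM, hzM, hgzM⟩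
          have h3 : ((q x : ℝ)) ∈ Icc (y : ℝ) (b : ℝ) :=
            ⟨le_trans hya.le (Subtype.coe_le_coe.mpr hx'.1),
              Subtype.coe_le_coe.mpr hx'.2⟩
          obtain ⟨z, hz, hgz⟩ := hord.out h1 h2 h3
          exact ⟨z, hz, Subtype.coe_injective hgz⟩
        have hzyK : zy ∉ (K.1 : Set Z) := by
          rw [hK]
          exact fun hm => hy (hzyq ▸ hm)
        exact hsupK C hμC
          (ssubset_of_subset_of_ne hKC (fun heq => hzyK (by rw [heq]; exact hzy)))
  have ha' : (0 : ℝ) < (a : ℝ) := by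
    have := Subtype.coe_lt_coe.mpr ha; rwa [hcoe0] at this
  have hb' : (b : ℝ) < 1 := by
    have := Subtype.coe_lt_coe.mpr hb; rwa [hcoe1] at this
  have hb0 : (0 : ℝ) < (b : ℝ) := lt_of_lt_of_le ha' (Subtype.coe_le_coe.mpr hab)
  -- left witness
  obtain ⟨p0, hp0⟩ := hqs 0
  obtain ⟨CL, hCLp, hCLμ⟩ := exists_whitney_point μ ⟨hcont, hsing, hstrict⟩
    Ztop hZtop hs0.le hsμ p0
  have hp0K : p0 ∉ (K.1 : Set Z) := by
    rw [hK]
    intro hm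
    have h2 : a ≤ (0 : unitInterval) := by rw [← hp0]; exact hm.1
    exact absurd ha (not_lt.mpr h2)
  have hCLK : CL ≠ K := fun h => hp0K (h ▸ hCLp)
  have hCLF : F CL < (b : ℝ) := by
    by_contra hge
    push_neg at hge
    obtain ⟨zM, hzM, hub, hFeq⟩ := hmaxx CL
    have hgzM : (b : ℝ) ≤ g zM := hFeq ▸ hge
    have hnt : (q '' (CL.1 : Set Z)).Nontrivial := by
      refine ⟨q p0, ⟨p0, hCLp, rfl⟩, q zM, ⟨zM, hzM, rfl⟩, ?_⟩
      rw [hp0]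
      intro h
      have hz : g zM = ((0 : unitInterval) : ℝ) := congrArg Subtype.val h.symm
      rw [hcoe0] at hz
      linarith
    have hatom := hqatomic (CL.1 : Set Z) CL.1.isCompact CL.2 hnt
    have hord := ((CL.2.image g hgc.continuousOn).isPreconnected).ordConnected
    have hKC : (K.1 : Set Z) ⊆ (CL.1 : Set Z) := by
      rw [hK, ← hatom]
      intro x hx
      have hx' : q x ∈ Icc a b := hx
      have h1 : (0 : ℝ) ∈ g '' (CL.1 : Set Z) :=
        ⟨p0, hCLp, by rw [show g p0 = ((q p0 : ℝ)) from rfl, hp0, hcoe0]⟩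
      have h2 : g zM ∈ g '' (CL.1 : Set Z) := ⟨zM, hzM, rfl⟩
      have h3 : ((q x : ℝ)) ∈ Icc (0 : ℝ) (g zM) :=
        ⟨(q x).2.1, le_trans (Subtype.coe_le_coe.mpr hx'.2) hgzM⟩
      obtain ⟨z, hz, hgz⟩ := hord.out h1 h2 h3
      exact ⟨z, hz, Subtype.coe_injective hgz⟩
    exact hsupK CL hCLμ
      (ssubset_of_subset_of_ne hKC (fun heq => hp0K (by rw [heq]; exact hCLp)))
  -- right witness
  obtain ⟨z1, hz1⟩ := hqs 1
  obtain ⟨CR, hCRp, hCRμ⟩ := exists_whitney_point μ ⟨hcont, hsing, hstrict⟩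
    Ztop hZtop hs0.le hsμ z1
  have hCRF : (b : ℝ) < F CR := by
    have hle : g z1 ≤ F CR := le_csSup (CR.1.isCompact.image hgc).bddAbove ⟨z1, hCRp, rfl⟩
    have hg1 : g z1 = 1 := by rw [show g z1 = ((q z1 : ℝ)) from rfl, hz1, hcoe1]
    linarith
  have hCRK : CR ≠ K := by
    intro h
    have hm : z1 ∈ (K.1 : Set Z) := h ▸ hCRp
    rw [hK] at hm
    have h2 : (1 : unitInterval) ≤ b := by rw [← hz1]; exact hm.2
    exact absurd hb (not_lt.mpr h2)
  -- separation
  have hcover : ({C : Subcontinua Z | μ C = s} \ {K}) ⊆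
      {C | F C < (b : ℝ)} ∪ {C | (b : ℝ) < F C} := by
    intro C hC
    rcases lt_trichotomy (F C) ((b : ℝ)) with h | h | h
    · exact Or.inl h
    · exact absurd (hclaim C hC.1 h) hC.2
    · exact Or.inr h
  obtain ⟨C, -, hClt, hCgt⟩ := hpre {C | F C < (b : ℝ)} {C | (b : ℝ) < F C}
    (isOpen_lt hFc continuous_const) (isOpen_lt continuous_const hFc)
    hcover ⟨CL, ⟨hCLμ, hCLK⟩, hCLF⟩ ⟨CR, ⟨hCRμ, hCRK⟩, hCRF⟩
  have hlt1 : F C < (b : ℝ) := hClt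
  have hlt2 : (b : ℝ) < F C := hCgt
  linarith
end
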